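/- arXiv:1910.02589 — 8 statements merged into one kernel-verified Lean document; each statement's English description precedes it below -/
import Mathlib

section
/- Let f₁, f₂ ∈ O_K[x] be distinct monic irreducible polynomials all of whose roots in K̄ have strictly positive valuation. If it is not the case that one of f₁, f₂ is Eisenstein and the other has degree 1, then ν_K(Res(f₁,f₂)) ≥ 2. -/
open Polynomial

/-- A monic polynomial `f = x^d + a_{d-1}x^{d-1} + ⋯ + a₀ ∈ O_K[x]` is *Eisenstein*
(with respect to the valuation `v` on an algebraic closure `Kbar` of `K`) if
`ν_K(a_i) ≥ 1` for all `i < d` and `ν_K(a₀) = 1`.  (The guard `coeff ≠ 0` reflects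
the convention `ν(0) = ∞ ≥ 1`.) -/
def IsEisensteinPoly {K Kbar : Type*} [Field K] [Field Kbar] [Algebra K Kbar]
    (v : Kbar → ℚ) (f : Polynomial K) : Prop :=
  f.Monic ∧
  (∀ i < f.natDegree, f.coeff i ≠ 0 → 1 ≤ v (algebraMap K Kbar (f.coeff i))) ∧
  f.coeff 0 ≠ 0 ∧ v (algebraMap K Kbar (f.coeff 0)) = 1

/-- The valuation of the resultant of two monic polynomials with no common root:
`ν_K(Res(f₁,f₂)) = Σ_{i,j} ν(α_i − β_j)` over the roots `α_i` of `f₁` and `β_j`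
of `f₂` in `Kbar` (with multiplicity). -/
noncomputable def resultantVal {K Kbar : Type*} [Field K] [Field Kbar] [Algebra K Kbar]
    (v : Kbar → ℚ) (f₁ f₂ : Polynomial K) : ℚ :=
  (((f₁.map (algebraMap K Kbar)).roots).map (fun α =>
    (((f₂.map (algebraMap K Kbar)).roots).map (fun β => v (α - β))).sum)).sum

/-!
All roots of an irreducible `f` are Galois conjugate, so they share one valuation, namely
`ν(f(0)) / deg f`; with `ν(α - β) ≥ min (ν α) (ν β)` this gives
`ν(Res(f₁, f₂)) ≥ min (deg f₂ · ν(f₁(0))) (deg f₁ · ν(f₂(0)))`.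
By Vieta every nonzero non-leading coefficient of `f` is a sum of products of roots, so it has
positive, hence (being in `K`) integral `≥ 1`, valuation. Thus `ν(f(0)) ≥ 1`, with equality
only if `f` is Eisenstein, and each term of the minimum is `≥ 2` unless one polynomial is
Eisenstein and the other has degree `1`. The polynomial `X` is treated apart, since `ν 0` is a
junk value: there `Res(X, f) = ±f(0)`.
-/

section Valuation

variable {F : Type*} [Field F] {v : F → ℚ}

section Mul

variable (hv_mul : ∀ x y : F, x ≠ 0 → y ≠ 0 → v (x * y) = v x + v y)
include hv_mul

theorem val_one : v 1 = 0 := by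
  have h := hv_mul 1 1 one_ne_zero one_ne_zero
  rw [mul_one] at h
  linarith

theorem val_neg {x : F} (hx : x ≠ 0) : v (-x) = v x := by
  have h := hv_mul (-1) (-1) (by simp) (by simp)
  rw [neg_one_mul, neg_neg, val_one hv_mul] at h
  rw [← neg_one_mul, hv_mul _ _ (by simp) hx]
  linarith

theorem val_neg_one_pow_mul (n : ℕ) {x : F} (hx : x ≠ 0) : v ((-1) ^ n * x) = v x := by
  rcases neg_one_pow_eq_or F n with h | h <;> simp [h, val_neg hv_mul hx]

theorem val_multiset_prod {s : Multiset F} (hs : s.prod ≠ 0) : v s.prod = (s.map v).sum := by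
  induction s using Multiset.induction with
  | empty => simpa using val_one hv_mul
  | cons a t ih =>
    rw [Multiset.prod_cons] at hs ⊢
    rw [hv_mul _ _ (left_ne_zero_of_mul hs) (right_ne_zero_of_mul hs),
      ih (right_ne_zero_of_mul hs), Multiset.map_cons, Multiset.sum_cons]

end Mul

section Add

variable (hv_add : ∀ x y : F, x ≠ 0 → y ≠ 0 → x + y ≠ 0 → min (v x) (v y) ≤ v (x + y))
include hv_add

theorem lt_val_multiset_sum {c : ℚ} {s : Multiset F} (hs : ∀ x ∈ s, x ≠ 0 → c < v x)
    (h0 : s.sum ≠ 0) : c < v s.sum := by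
  induction s using Multiset.induction with
  | empty => simp at h0
  | cons a t ih =>
    rw [Multiset.sum_cons] at h0 ⊢
    have ht : ∀ x ∈ t, x ≠ 0 → c < v x := fun x hx => hs x (Multiset.mem_cons_of_mem hx)
    by_cases ha : a = 0
    · rw [ha, zero_add] at h0 ⊢
      exact ih ht h0
    by_cases hts : t.sum = 0
    · rw [hts, add_zero]
      exact hs a (Multiset.mem_cons_self a t) ha
    exact (lt_min (hs a (Multiset.mem_cons_self a t) ha) (ih ht hts)).trans_le
      (hv_add a t.sum ha hts h0)

theorem min_le_val_sub (hv_mul : ∀ x y : F, x ≠ 0 → y ≠ 0 → v (x * y) = v x + v y)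
    {x y : F} (hxy : x ≠ y) : min (v x) (v y) ≤ v (x - y) := by
  rcases eq_or_ne x 0 with rfl | hx
  · rw [zero_sub, val_neg hv_mul (Ne.symm hxy)]
    exact min_le_right _ _
  rcases eq_or_ne y 0 with rfl | hy
  · rw [sub_zero]
    exact min_le_left _ _
  rw [sub_eq_add_neg, ← val_neg hv_mul hy]
  exact hv_add x (-y) hx (neg_ne_zero.2 hy) (by rwa [← sub_eq_add_neg, sub_ne_zero])

end Add

end Valuation

section Roots

variable {F : Type*} [Field F] {v : F → ℚ}
  (hv_mul : ∀ x y : F, x ≠ 0 → y ≠ 0 → v (x * y) = v x + v y)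
  {p : F[X]} (hp : p.Monic) (hs : p.Splits)
include hv_mul hp hs

theorem val_coeff_zero_eq_sum_val_roots (h0 : p.coeff 0 ≠ 0) :
    v (p.coeff 0) = (p.roots.map v).sum := by
  rw [hs.coeff_zero_eq_prod_roots_of_monic hp] at h0 ⊢
  rw [val_neg_one_pow_mul hv_mul _ (right_ne_zero_of_mul h0),
    val_multiset_prod hv_mul (right_ne_zero_of_mul h0)]

theorem val_coeff_pos
    (hv_add : ∀ x y : F, x ≠ 0 → y ≠ 0 → x + y ≠ 0 → min (v x) (v y) ≤ v (x + y))
    (hpos : ∀ α ∈ p.roots, 0 < v α) {i : ℕ} (hi : i < p.natDegree) (hci : p.coeff i ≠ 0) :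
    0 < v (p.coeff i) := by
  rw [coeff_eq_esymm_roots_of_splits hs hi.le, hp.leadingCoeff, one_mul] at hci ⊢
  rw [val_neg_one_pow_mul hv_mul _ (right_ne_zero_of_mul hci)]
  refine lt_val_multiset_sum hv_add (fun x hx hx0 => ?_) (right_ne_zero_of_mul hci)
  obtain ⟨t, ht, rfl⟩ := Multiset.mem_map.1 hx
  obtain ⟨htp, hcard⟩ := Multiset.mem_powersetCard.1 ht
  have hne : t ≠ 0 := Multiset.card_pos.1 (by omega)
  rw [val_multiset_prod hv_mul hx0]
  simpa using Multiset.sum_lt_sum_of_nonempty (f := fun _ => (0 : ℚ)) hne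
    fun α hα => hpos α (Multiset.mem_of_le htp hα)

end Roots

section Irreducible

variable {K Kbar : Type*} [Field K] [Field Kbar] [Algebra K Kbar] {v : Kbar → ℚ} {f : K[X]}

theorem coeff_zero_ne_zero_of_irreducible (hf : f.Monic) (hirr : Irreducible f) (hX : f ≠ X) :
    f.coeff 0 ≠ 0 := fun h =>
  hX <| eq_of_monic_of_associated hf monic_X <| associated_of_dvd_dvd
    (irreducible_X.dvd_symm hirr (X_dvd_iff.2 h)) (X_dvd_iff.2 h)

theorem minpoly_eq_of_mem_roots (hf : f.Monic) (hirr : Irreducible f) {α : Kbar}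
    (hα : α ∈ (f.map (algebraMap K Kbar)).roots) : minpoly K α = f := by
  refine (minpoly.eq_of_irreducible_of_monic hirr ?_ hf).symm
  rw [aeval_def, ← eval_map]
  exact (mem_roots'.1 hα).2

theorem val_eq_of_mem_roots [IsAlgClosure K Kbar]
    (hv_gal : ∀ (σ : Kbar ≃ₐ[K] Kbar) (x : Kbar), v (σ x) = v x)
    (hf : f.Monic) (hirr : Irreducible f) {α β : Kbar}
    (hα : α ∈ (f.map (algebraMap K Kbar)).roots) (hβ : β ∈ (f.map (algebraMap K Kbar)).roots) :
    v α = v β := by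
  have hαβ : aeval α (minpoly K β) = 0 := by
    rw [minpoly_eq_of_mem_roots hf hirr hβ, aeval_def, ← eval_map]
    exact (mem_roots'.1 hα).2
  obtain ⟨σ, hσ⟩ := minpoly.exists_algEquiv_of_root (Algebra.IsAlgebraic.isAlgebraic β) hαβ
  rw [← hσ, hv_gal]

theorem natDegree_mul_val_root [IsAlgClosure K Kbar]
    (hv_mul : ∀ x y : Kbar, x ≠ 0 → y ≠ 0 → v (x * y) = v x + v y)
    (hv_gal : ∀ (σ : Kbar ≃ₐ[K] Kbar) (x : Kbar), v (σ x) = v x)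
    (hf : f.Monic) (hirr : Irreducible f) (h0 : f.coeff 0 ≠ 0) {α : Kbar}
    (hα : α ∈ (f.map (algebraMap K Kbar)).roots) :
    (f.natDegree : ℚ) * v α = v (algebraMap K Kbar (f.coeff 0)) := by
  have := IsAlgClosure.isAlgClosed K (K := Kbar)
  have hroots : (f.map (algebraMap K Kbar)).roots.map v = Multiset.replicate f.natDegree (v α) := by
    refine Multiset.eq_replicate.2 ⟨?_, fun b hb => ?_⟩
    · rw [Multiset.card_map, IsAlgClosed.card_roots_eq_natDegree, hf.natDegree_map]
    · obtain ⟨β, hβ, rfl⟩ := Multiset.mem_map.1 hb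
      exact val_eq_of_mem_roots hv_gal hf hirr hβ hα
  rw [← coeff_map, val_coeff_zero_eq_sum_val_roots hv_mul (hf.map _) (IsAlgClosed.splits _)
    (by rwa [coeff_map, map_ne_zero_iff _ (algebraMap K Kbar).injective]), hroots,
    Multiset.sum_replicate, nsmul_eq_mul]

variable [IsAlgClosed Kbar]
  (hv_mul : ∀ x y : Kbar, x ≠ 0 → y ≠ 0 → v (x * y) = v x + v y)
  (hv_add : ∀ x y : Kbar, x ≠ 0 → y ≠ 0 → x + y ≠ 0 → min (v x) (v y) ≤ v (x + y))
  (hv_int : ∀ x : K, x ≠ 0 → ∃ n : ℤ, v (algebraMap K Kbar x) = (n : ℚ))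
  (hf : f.Monic) (hpos : ∀ α ∈ (f.map (algebraMap K Kbar)).roots, 0 < v α)
include hv_mul hv_add hv_int hf hpos

theorem one_le_val_coeff {i : ℕ} (hi : i < f.natDegree) (hci : f.coeff i ≠ 0) :
    1 ≤ v (algebraMap K Kbar (f.coeff i)) := by
  obtain ⟨n, hn⟩ := hv_int _ hci
  have hci' : (f.map (algebraMap K Kbar)).coeff i ≠ 0 := by
    rwa [coeff_map, map_ne_zero_iff _ (algebraMap K Kbar).injective]
  have := val_coeff_pos hv_mul (hf.map _) (IsAlgClosed.splits _) hv_add hpos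
    (by rwa [hf.natDegree_map]) hci'
  rw [coeff_map, hn] at this
  rw [hn]
  exact_mod_cast (show (0 : ℤ) < n by exact_mod_cast this)

theorem isEisensteinPoly_of_val_coeff_zero_eq_one (h0 : f.coeff 0 ≠ 0)
    (h1 : v (algebraMap K Kbar (f.coeff 0)) = 1) : IsEisensteinPoly v f :=
  ⟨hf, fun _ hi hci => one_le_val_coeff hv_mul hv_add hv_int hf hpos hi hci, h0, h1⟩

theorem two_le_mul_val_coeff_zero (hdeg : 0 < f.natDegree) (h0 : f.coeff 0 ≠ 0) {d : ℕ}
    (hd : 0 < d) (hEis : ¬(IsEisensteinPoly v f ∧ d = 1)) :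
    2 ≤ d * v (algebraMap K Kbar (f.coeff 0)) := by
  obtain ⟨n, hn⟩ := hv_int _ h0
  have hn1 : 1 ≤ n := by exact_mod_cast hn ▸ one_le_val_coeff hv_mul hv_add hv_int hf hpos hdeg h0
  rw [hn]
  rcases hn1.eq_or_lt with rfl | hn2
  · have hEis₁ := isEisensteinPoly_of_val_coeff_zero_eq_one hv_mul hv_add hv_int hf hpos h0
      (by simpa using hn)
    have hd2 : 2 ≤ d := lt_of_le_of_ne hd fun hd1 => hEis ⟨hEis₁, hd1.symm⟩
    simpa using (Nat.cast_le (α := ℚ)).2 hd2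
  · have hn2' : (2 : ℚ) ≤ n := by exact_mod_cast hn2
    have hd1 : (1 : ℚ) ≤ d := by exact_mod_cast hd
    nlinarith

end Irreducible

section Resultant

variable {K Kbar : Type*} [Field K] [Field Kbar] [Algebra K Kbar] {v : Kbar → ℚ}
  (hv_mul : ∀ x y : Kbar, x ≠ 0 → y ≠ 0 → v (x * y) = v x + v y)
include hv_mul

theorem card_mul_card_mul_min_le_resultantVal
    (hv_add : ∀ x y : Kbar, x ≠ 0 → y ≠ 0 → x + y ≠ 0 → min (v x) (v y) ≤ v (x + y))
    {f₁ f₂ : K[X]} {r₁ r₂ : ℚ}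
    (hr₁ : ∀ α ∈ (f₁.map (algebraMap K Kbar)).roots, r₁ ≤ v α)
    (hr₂ : ∀ β ∈ (f₂.map (algebraMap K Kbar)).roots, r₂ ≤ v β)
    (hdisj : ∀ α ∈ (f₁.map (algebraMap K Kbar)).roots,
      ∀ β ∈ (f₂.map (algebraMap K Kbar)).roots, α ≠ β) :
    (Multiset.card (f₁.map (algebraMap K Kbar)).roots : ℚ) *
      Multiset.card (f₂.map (algebraMap K Kbar)).roots * min r₁ r₂ ≤ resultantVal v f₁ f₂ := by
  set R₁ := (f₁.map (algebraMap K Kbar)).roots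
  set R₂ := (f₂.map (algebraMap K Kbar)).roots
  have hinner : ∀ α ∈ R₁, (Multiset.card R₂ : ℚ) * min r₁ r₂ ≤ (R₂.map fun β => v (α - β)).sum :=
    fun α hα => by
      simpa using Multiset.card_nsmul_le_sum (s := R₂.map fun β => v (α - β)) (a := min r₁ r₂)
        (Multiset.forall_mem_map_iff.2 fun β hβ => (min_le_min (hr₁ α hα) (hr₂ β hβ)).trans
          (min_le_val_sub hv_add hv_mul (hdisj α hα β hβ)))
  simpa [mul_assoc, resultantVal] using Multiset.card_nsmul_le_sum
    (s := R₁.map fun α => (R₂.map fun β => v (α - β)).sum) (Multiset.forall_mem_map_iff.2 hinner)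

theorem min_le_resultantVal [IsAlgClosure K Kbar]
    (hv_add : ∀ x y : Kbar, x ≠ 0 → y ≠ 0 → x + y ≠ 0 → min (v x) (v y) ≤ v (x + y))
    (hv_gal : ∀ (σ : Kbar ≃ₐ[K] Kbar) (x : Kbar), v (σ x) = v x)
    {f₁ f₂ : K[X]} (hf₁ : f₁.Monic) (hf₂ : f₂.Monic) (hirr₁ : Irreducible f₁)
    (hirr₂ : Irreducible f₂) (hne : f₁ ≠ f₂) (h0₁ : f₁.coeff 0 ≠ 0) (h0₂ : f₂.coeff 0 ≠ 0) :
    min ((f₂.natDegree : ℚ) * v (algebraMap K Kbar (f₁.coeff 0)))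
      ((f₁.natDegree : ℚ) * v (algebraMap K Kbar (f₂.coeff 0))) ≤ resultantVal v f₁ f₂ := by
  have := IsAlgClosure.isAlgClosed K (K := Kbar)
  have hd₁ : (0 : ℚ) < f₁.natDegree := by exact_mod_cast hirr₁.natDegree_pos
  have hd₂ : (0 : ℚ) < f₂.natDegree := by exact_mod_cast hirr₂.natDegree_pos
  have hdisj : ∀ α ∈ (f₁.map (algebraMap K Kbar)).roots,
      ∀ β ∈ (f₂.map (algebraMap K Kbar)).roots, α ≠ β := fun α hα β hβ h => hne <| by
    rw [← minpoly_eq_of_mem_roots hf₁ hirr₁ hα, h, minpoly_eq_of_mem_roots hf₂ hirr₂ hβ]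
  have hroot : ∀ {f : K[X]}, f.Monic → Irreducible f → f.coeff 0 ≠ 0 →
      ∀ α ∈ (f.map (algebraMap K Kbar)).roots,
        v (algebraMap K Kbar (f.coeff 0)) / f.natDegree ≤ v α := fun hf hirr h0 α hα => by
    rw [← natDegree_mul_val_root hv_mul hv_gal hf hirr h0 hα,
      mul_div_cancel_left₀ _ (by exact_mod_cast hirr.natDegree_pos.ne')]
  have key := card_mul_card_mul_min_le_resultantVal hv_mul hv_add
    (hroot hf₁ hirr₁ h0₁) (hroot hf₂ hirr₂ h0₂) hdisj
  rw [IsAlgClosed.card_roots_eq_natDegree, IsAlgClosed.card_roots_eq_natDegree,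
    hf₁.natDegree_map, hf₂.natDegree_map, mul_min_of_nonneg _ _ (by positivity)] at key
  refine le_of_eq_of_le ?_ key
  congr 1 <;> field_simp

theorem resultantVal_X_left [IsAlgClosed Kbar] {f : K[X]} (hf : f.Monic) (h0 : f.coeff 0 ≠ 0) :
    resultantVal v X f = v (algebraMap K Kbar (f.coeff 0)) := by
  have h0' : (f.map (algebraMap K Kbar)).coeff 0 ≠ 0 := by
    rwa [coeff_map, map_ne_zero_iff _ (algebraMap K Kbar).injective]
  rw [← coeff_map, val_coeff_zero_eq_sum_val_roots hv_mul (hf.map _) (IsAlgClosed.splits _) h0']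
  simp only [resultantVal, Polynomial.map_X, roots_X, Multiset.map_singleton,
    Multiset.sum_singleton]
  refine congrArg Multiset.sum (Multiset.map_congr rfl fun β hβ => ?_)
  have hβ0 : β ≠ 0 := by
    rintro rfl
    exact h0' (by rw [coeff_zero_eq_eval_zero]; exact (mem_roots'.1 hβ).2)
  rw [zero_sub, val_neg hv_mul hβ0]

theorem resultantVal_X_right [IsAlgClosed Kbar] {f : K[X]} (hf : f.Monic) (h0 : f.coeff 0 ≠ 0) :
    resultantVal v f X = v (algebraMap K Kbar (f.coeff 0)) := by
  rw [← coeff_map, val_coeff_zero_eq_sum_val_roots hv_mul (hf.map _) (IsAlgClosed.splits _)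
    (by rwa [coeff_map, map_ne_zero_iff _ (algebraMap K Kbar).injective])]
  simp [resultantVal]

end Resultant

theorem resultant_val_ge_two_general
    {K Kbar : Type*} [Field K] [Field Kbar] [Algebra K Kbar] [IsAlgClosure K Kbar]
    (v : Kbar → ℚ)
    (hv_mul : ∀ x y : Kbar, x ≠ 0 → y ≠ 0 → v (x * y) = v x + v y)
    (hv_add : ∀ x y : Kbar, x ≠ 0 → y ≠ 0 → x + y ≠ 0 → min (v x) (v y) ≤ v (x + y))
    (hv_gal : ∀ (σ : Kbar ≃ₐ[K] Kbar) (x : Kbar), v (σ x) = v x)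
    (hv_int : ∀ x : K, x ≠ 0 → ∃ n : ℤ, v (algebraMap K Kbar x) = (n : ℚ))
    (f₁ f₂ : Polynomial K)
    (hmon₁ : f₁.Monic) (hmon₂ : f₂.Monic)
    (hirr₁ : Irreducible f₁) (hirr₂ : Irreducible f₂)
    (hne : f₁ ≠ f₂)
    (hpos₁ : ∀ α ∈ (f₁.map (algebraMap K Kbar)).roots, 0 < v α)
    (hpos₂ : ∀ β ∈ (f₂.map (algebraMap K Kbar)).roots, 0 < v β)
    (hnotEis : ¬ ((IsEisensteinPoly v f₁ ∧ f₂.natDegree = 1) ∨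
                  (IsEisensteinPoly v f₂ ∧ f₁.natDegree = 1))) :
    2 ≤ resultantVal v f₁ f₂ := by
  have := IsAlgClosure.isAlgClosed K (K := Kbar)
  by_cases h₁ : f₁ = X
  · subst h₁
    have h0₂ := coeff_zero_ne_zero_of_irreducible hmon₂ hirr₂ (Ne.symm hne)
    rw [resultantVal_X_left hv_mul hmon₂ h0₂]
    simpa using two_le_mul_val_coeff_zero hv_mul hv_add hv_int hmon₂ hpos₂ hirr₂.natDegree_pos
      h0₂ one_pos (by simpa using fun h => hnotEis (Or.inr h))
  by_cases h₂ : f₂ = X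
  · subst h₂
    have h0₁ := coeff_zero_ne_zero_of_irreducible hmon₁ hirr₁ h₁
    rw [resultantVal_X_right hv_mul hmon₁ h0₁]
    simpa using two_le_mul_val_coeff_zero hv_mul hv_add hv_int hmon₁ hpos₁ hirr₁.natDegree_pos
      h0₁ one_pos (by simpa using fun h => hnotEis (Or.inl h))
  have h0₁ := coeff_zero_ne_zero_of_irreducible hmon₁ hirr₁ h₁
  have h0₂ := coeff_zero_ne_zero_of_irreducible hmon₂ hirr₂ h₂
  exact (le_min
    (two_le_mul_val_coeff_zero hv_mul hv_add hv_int hmon₁ hpos₁ hirr₁.natDegree_pos h0₁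
      hirr₂.natDegree_pos fun h => hnotEis (Or.inl h))
    (two_le_mul_val_coeff_zero hv_mul hv_add hv_int hmon₂ hpos₂ hirr₂.natDegree_pos h0₂
      hirr₁.natDegree_pos fun h => hnotEis (Or.inr h))).trans
    (min_le_resultantVal hv_mul hv_add hv_gal hmon₁ hmon₂ hirr₁ hirr₂ hne h0₁ h0₂)

/-- Let `K` be a field, Henselian with respect to a discrete valuation
`ν_K` with algebraically closed residue field, with fixed algebraic closure `Kbar` and
(unique, Galois-invariant) extension `v` of `ν_K`, normalized so that a uniformizer
`πK` satisfies `v πK = 1` and `v` is `ℤ`-valued on `K`.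
If `f₁, f₂ ∈ O_K[x]` are distinct monic irreducible polynomials all of whose roots
in `Kbar` have strictly positive valuation, and it is not the case that one of
`f₁, f₂` is Eisenstein and the other has degree `1`, then
`ν_K(Res(f₁,f₂)) ≥ 2`. -/
theorem resultant_val_ge_two
    {K Kbar : Type*} [Field K] [Field Kbar] [Algebra K Kbar] [IsAlgClosure K Kbar]
    (v : Kbar → ℚ)
    (hv_mul : ∀ x y : Kbar, x ≠ 0 → y ≠ 0 → v (x * y) = v x + v y)
    (hv_add : ∀ x y : Kbar, x ≠ 0 → y ≠ 0 → x + y ≠ 0 → min (v x) (v y) ≤ v (x + y))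
    (hv_gal : ∀ (σ : Kbar ≃ₐ[K] Kbar) (x : Kbar), v (σ x) = v x)
    (hv_int : ∀ x : K, x ≠ 0 → ∃ n : ℤ, v (algebraMap K Kbar x) = (n : ℚ))
    (πK : K) (hπK : πK ≠ 0 ∧ v (algebraMap K Kbar πK) = 1)
    (hv_res : ∀ x : Kbar, x ≠ 0 → 0 ≤ v x →
      ∃ η : K, x = algebraMap K Kbar η ∨ 0 < v (x - algebraMap K Kbar η))
    (f₁ f₂ : Polynomial K)
    (hmon₁ : f₁.Monic) (hmon₂ : f₂.Monic)
    (hirr₁ : Irreducible f₁) (hirr₂ : Irreducible f₂)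
    (hne : f₁ ≠ f₂)
    (hcoeff₁ : ∀ n, f₁.coeff n ≠ 0 → 0 ≤ v (algebraMap K Kbar (f₁.coeff n)))
    (hcoeff₂ : ∀ n, f₂.coeff n ≠ 0 → 0 ≤ v (algebraMap K Kbar (f₂.coeff n)))
    (hpos₁ : ∀ α ∈ (f₁.map (algebraMap K Kbar)).roots, 0 < v α)
    (hpos₂ : ∀ β ∈ (f₂.map (algebraMap K Kbar)).roots, 0 < v β)
    (hnotEis : ¬ ((IsEisensteinPoly v f₁ ∧ f₂.natDegree = 1) ∨
                  (IsEisensteinPoly v f₂ ∧ f₁.natDegree = 1))) :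
    2 ≤ resultantVal v f₁ f₂ :=
  resultant_val_ge_two_general v hv_mul hv_add hv_gal hv_int f₁ f₂ hmon₁ hmon₂ hirr₁ hirr₂ hne hpos₁
    hpos₂ hnotEis
end

section
/- Let f₁, f₂ ∈ O_K[x] be monic irreducible polynomials all of whose roots in K̄ have strictly positive valuation. Suppose f₁ is not Eisenstein and deg f₁ ≥ 3, and f₂ is Eisenstein with deg f₂ ≥ 2. Then ν_K(Res(f₁,f₂)) ≥ 3. -/
/-!
Being distinct (only `f₂` is Eisenstein) monic irreducible polynomials, `f₁` and `f₂` have no common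
root, and `ν_K(Res(f₁,f₂))` is the sum of `ν(f₁(β))` over the roots `β` of `f₂`. The non-leading
coefficients of `f₁` are, up to sign, elementary symmetric functions of its roots, so they have
positive valuation, hence valuation `≥ 1` since they lie in `K`; as `f₁` is not Eisenstein, its
constant term has valuation `≥ 2`. The Eisenstein equation gives `ν(β) ≥ 1/e` with `e = deg f₂ ≥ 2`,
so every monomial of `f₁(β)` has valuation at least `min (2, 1 + 1/e, deg f₁ / e) ≥ 3/e`, and the
`e` roots `β` add up to `≥ 3`.

The function `v` is only meaningful on nonzero elements; extended by `⊤` at `0` it becomes an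
`AddValuation` with values in `WithTop ℚ`.
-/

open Polynomial

namespace AddValuation

section LinearOrderedAddCommMonoidWithTop

variable {R Γ₀ : Type*} [CommRing R] [LinearOrderedAddCommMonoidWithTop Γ₀]
  (w : AddValuation R Γ₀)

theorem map_multiset_prod (s : Multiset R) : w s.prod = (s.map w).sum := by
  induction s using Multiset.induction with
  | empty => simp
  | cons a s ih => rw [Multiset.prod_cons, w.map_mul, ih, Multiset.map_cons, Multiset.sum_cons]

theorem map_multiset_prod_pos {s : Multiset R} (hs₀ : s ≠ 0) (hs : ∀ a ∈ s, 0 < w a) :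
    0 < w s.prod := by
  obtain ⟨a, ha⟩ := Multiset.exists_mem_of_ne_zero hs₀
  obtain ⟨t, rfl⟩ := Multiset.exists_cons_of_mem ha
  rw [w.map_multiset_prod, Multiset.map_cons, Multiset.sum_cons]
  refine add_pos_of_pos_of_nonneg (hs a ha) (Multiset.sum_nonneg fun x hx => ?_)
  obtain ⟨b, hb, rfl⟩ := Multiset.mem_map.1 hx
  exact (hs b (Multiset.mem_cons_of_mem hb)).le

theorem lt_map_multiset_sum {g : Γ₀} (hg : g < ⊤) {s : Multiset R} (hs : ∀ a ∈ s, g < w a) :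
    g < w s.sum := by
  induction s using Multiset.induction with
  | empty => simpa using hg
  | cons a s ih =>
    rw [Multiset.sum_cons]
    exact w.map_lt_add (hs a (Multiset.mem_cons_self a s))
      (ih fun b hb => hs b (Multiset.mem_cons_of_mem hb))

theorem le_nsmul_map_of_isRoot {F : R[X]} (hF : F.Monic) {β : R} (hβ : F.IsRoot β)
    (hβ₀ : 0 ≤ w β) {c : Γ₀} (hc : ∀ i < F.natDegree, c ≤ w (F.coeff i)) :
    c ≤ F.natDegree • w β := by
  rw [IsRoot, eval_eq_sum_range, Finset.sum_range_succ, hF.coeff_natDegree, one_mul] at hβ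
  rw [← w.map_pow, eq_neg_of_add_eq_zero_right hβ, w.map_neg]
  refine w.map_le_sum fun i hi => ?_
  rw [w.map_mul, w.map_pow]
  exact le_add_of_le_of_nonneg (hc i (Finset.mem_range.1 hi)) (nsmul_nonneg hβ₀ i)

end LinearOrderedAddCommMonoidWithTop

section LinearOrderedAddCommGroupWithTop

variable {R Γ₀ : Type*} [CommRing R] [LinearOrderedAddCommGroupWithTop Γ₀]
  (w : AddValuation R Γ₀)

theorem map_esymm_pos {s : Multiset R} (hs : ∀ a ∈ s, 0 < w a) {k : ℕ} (hk : 0 < k) :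
    0 < w (s.esymm k) := by
  refine w.lt_map_multiset_sum LinearOrderedAddCommGroupWithTop.top_pos fun x hx => ?_
  obtain ⟨t, ht, rfl⟩ := Multiset.mem_map.1 hx
  obtain ⟨hts, hcard⟩ := Multiset.mem_powersetCard.1 ht
  exact w.map_multiset_prod_pos (Multiset.card_pos.1 (hcard ▸ hk))
    fun a ha => hs a (Multiset.mem_of_le hts ha)

theorem map_coeff_prod_X_sub_C_pos {s : Multiset R} (hs : ∀ a ∈ s, 0 < w a) {i : ℕ}
    (hi : i < Multiset.card s) : 0 < w ((s.map fun a => X - C a).prod.coeff i) := by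
  rw [s.prod_X_sub_C_coeff hi.le, w.map_mul, w.map_pow, w.map_neg, w.map_one, nsmul_zero,
    zero_add]
  exact w.map_esymm_pos hs (Nat.sub_pos_of_lt hi)

theorem map_coeff_pos_of_roots_pos [IsDomain R] {F : R[X]} (hF : F.Monic) (hsplit : F.Splits)
    (hroots : ∀ α ∈ F.roots, 0 < w α) {i : ℕ} (hi : i < F.natDegree) : 0 < w (F.coeff i) := by
  rw [hsplit.eq_prod_roots_of_monic hF]
  exact w.map_coeff_prod_X_sub_C_pos hroots (hsplit.natDegree_eq_card_roots ▸ hi)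

end LinearOrderedAddCommGroupWithTop

theorem coe_three_div_le_map_eval {R : Type*} [CommRing R] (w : AddValuation R (WithTop ℚ))
    {F : R[X]} (hF : F.Monic) (hd : 3 ≤ F.natDegree) (hc₀ : 2 ≤ w (F.coeff 0))
    (hc : ∀ i < F.natDegree, 1 ≤ w (F.coeff i)) {e : ℕ} (he : 2 ≤ e) {β : R}
    (hβ : ((1 / e : ℚ) : WithTop ℚ) ≤ w β) : ((3 / e : ℚ) : WithTop ℚ) ≤ w (F.eval β) := by
  have he₀ : (0 : ℚ) < e := by positivity
  have he₂ : (2 : ℚ) ≤ e := by exact_mod_cast he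
  rw [eval_eq_sum_range]
  refine w.map_le_sum fun i hi => ?_
  rw [w.map_mul, w.map_pow]
  have hβi : ((i / e : ℚ) : WithTop ℚ) ≤ i • w β := by
    calc ((i / e : ℚ) : WithTop ℚ) = i • ((1 / e : ℚ) : WithTop ℚ) := by
          rw [← WithTop.coe_nsmul, nsmul_eq_mul, mul_one_div]
      _ ≤ i • w β := nsmul_le_nsmul_right hβ i
  obtain rfl | hi₀ := eq_or_ne i 0
  · calc ((3 / e : ℚ) : WithTop ℚ) ≤ ((2 : ℚ) : WithTop ℚ) := by
          rw [WithTop.coe_le_coe, div_le_iff₀ he₀]; linarith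
      _ ≤ w (F.coeff 0) := by exact_mod_cast hc₀
      _ ≤ w (F.coeff 0) + 0 • w β := by simp
  obtain hid | rfl := (Nat.lt_succ_iff.1 (Finset.mem_range.1 hi)).lt_or_eq
  · have hi₁ : (1 : ℚ) ≤ i := by exact_mod_cast Nat.one_le_iff_ne_zero.2 hi₀
    calc ((3 / e : ℚ) : WithTop ℚ) ≤ ((1 + i / e : ℚ) : WithTop ℚ) := by
          rw [WithTop.coe_le_coe, div_le_iff₀ he₀, add_mul, div_mul_cancel₀ _ he₀.ne']
          linarith
      _ = (1 : WithTop ℚ) + ((i / e : ℚ) : WithTop ℚ) := by norm_cast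
      _ ≤ w (F.coeff i) + i • w β := add_le_add (hc i hid) hβi
  · rw [hF.coeff_natDegree, w.map_one, zero_add]
    refine le_trans (WithTop.coe_le_coe.2 ?_) hβi
    gcongr
    exact_mod_cast hd

end AddValuation

theorem WithTop.coe_div_le_of_le_nsmul {q : ℚ} {x : WithTop ℚ} {n : ℕ} (hn : 0 < n)
    (h : (q : WithTop ℚ) ≤ n • x) : ((q / n : ℚ) : WithTop ℚ) ≤ x := by
  induction x with
  | top => exact le_top
  | coe x =>
    rw [← WithTop.coe_nsmul, WithTop.coe_le_coe, nsmul_eq_mul] at h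
    rw [WithTop.coe_le_coe, div_le_iff₀' (by positivity)]
    exact h

theorem Multiset.le_sum_map_of_forall_div_card_le {ι : Type*} {s : Multiset ι} {f : ι → ℚ}
    {c : ℚ} (hs : s ≠ 0) (h : ∀ x ∈ s, c / Multiset.card s ≤ f x) : c ≤ (s.map f).sum := by
  have hcard : (0 : ℚ) < Multiset.card s := by exact_mod_cast Multiset.card_pos.2 hs
  calc c = Multiset.card (s.map f) • (c / Multiset.card s) := by
        rw [Multiset.card_map, nsmul_eq_mul]; field_simp
    _ ≤ (s.map f).sum := Multiset.card_nsmul_le_sum fun x hx => by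
        obtain ⟨a, ha, rfl⟩ := Multiset.mem_map.1 hx
        exact h a ha

theorem aeval_eq_zero_of_mem_roots_map {K L : Type*} [CommRing K] [CommRing L] [IsDomain L]
    [Algebra K L] {f : K[X]} {α : L} (hα : α ∈ (f.map (algebraMap K L)).roots) :
    aeval α f = 0 := by
  rw [aeval_def, ← eval_map]
  exact isRoot_of_mem_roots hα

theorem ne_of_mem_roots_map_of_irreducible {K L : Type*} [Field K] [CommRing L] [IsDomain L]
    [Algebra K L] {f g : K[X]} (hf : Irreducible f) (hg : Irreducible g) (hfm : f.Monic)
    (hgm : g.Monic) (hfg : f ≠ g) {α β : L} (hα : α ∈ (f.map (algebraMap K L)).roots)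
    (hβ : β ∈ (g.map (algebraMap K L)).roots) : α ≠ β := by
  rintro rfl
  exact hfg <| (minpoly.eq_of_irreducible_of_monic hf (aeval_eq_zero_of_mem_roots_map hα) hfm).trans
    (minpoly.eq_of_irreducible_of_monic hg (aeval_eq_zero_of_mem_roots_map hβ) hgm).symm

section AddValuationOfNeZero

variable {L : Type*} [Ring L] [IsDomain L] (v : L → ℚ)
  (hv_mul : ∀ x y : L, x ≠ 0 → y ≠ 0 → v (x * y) = v x + v y)
  (hv_add : ∀ x y : L, x ≠ 0 → y ≠ 0 → x + y ≠ 0 → min (v x) (v y) ≤ v (x + y))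

open Classical in
noncomputable def addValuationOfNeZero : AddValuation L (WithTop ℚ) :=
  AddValuation.of (fun x => if x = 0 then ⊤ else (v x : WithTop ℚ)) (if_pos rfl)
    (by
      have h := hv_mul 1 1 one_ne_zero one_ne_zero
      rw [mul_one] at h
      simp only [one_ne_zero, if_false, WithTop.coe_eq_zero]
      linarith)
    (by
      intro x y
      by_cases hx : x = 0
      · simp [hx]
      by_cases hy : y = 0
      · simp [hy]
      by_cases hxy : x + y = 0
      · simp [hxy]
      simp only [hx, hy, hxy, if_false, ← WithTop.coe_min, WithTop.coe_le_coe]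
      exact hv_add x y hx hy hxy)
    (by
      intro x y
      by_cases hx : x = 0
      · simp [hx]
      by_cases hy : y = 0
      · simp [hy]
      simp [hx, hy, hv_mul x y hx hy])

theorem addValuationOfNeZero_of_ne_zero {x : L} (hx : x ≠ 0) :
    addValuationOfNeZero v hv_mul hv_add x = v x :=
  if_neg hx

theorem addValuationOfNeZero_pos {x : L} (hx : 0 < v x) :
    0 < addValuationOfNeZero v hv_mul hv_add x := by
  by_cases hx₀ : x = 0
  · simp [addValuationOfNeZero, hx₀]
  rw [addValuationOfNeZero_of_ne_zero v hv_mul hv_add hx₀]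
  exact_mod_cast hx

end AddValuationOfNeZero

section Extension

variable {K L : Type*} [Field K] [Field L] [Algebra K L] {v : L → ℚ}
  {w : AddValuation L (WithTop ℚ)} (hvw : ∀ x, x ≠ 0 → w x = v x)
  (hv_int : ∀ x : K, x ≠ 0 → ∃ n : ℤ, v (algebraMap K L x) = (n : ℚ))
include hvw

theorem isEisensteinPoly_iff (f : K[X]) :
    IsEisensteinPoly v f ↔ f.Monic ∧
      (∀ i < f.natDegree, 1 ≤ w (algebraMap K L (f.coeff i))) ∧
      w (algebraMap K L (f.coeff 0)) = 1 := by
  have hw (c : K) (hc : c ≠ 0) : w (algebraMap K L c) = v (algebraMap K L c) :=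
    hvw _ ((_root_.map_ne_zero _).2 hc)
  have hle (c : K) : 1 ≤ w (algebraMap K L c) ↔ (c ≠ 0 → 1 ≤ v (algebraMap K L c)) := by
    by_cases hc : c = 0
    · simp [hc]
    rw [hw c hc, ← WithTop.coe_one, WithTop.coe_le_coe]
    exact ⟨fun h _ => h, fun h => h hc⟩
  have heq (c : K) : w (algebraMap K L c) = 1 ↔ c ≠ 0 ∧ v (algebraMap K L c) = 1 := by
    by_cases hc : c = 0
    · simp [hc]
    rw [hw c hc, ← WithTop.coe_one, WithTop.coe_eq_coe]
    exact ⟨fun h => ⟨hc, h⟩, fun h => h.2⟩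
  simp only [IsEisensteinPoly, hle, heq]

theorem resultantVal_eq_sum_val_eval {f₁ f₂ : K[X]} (hmon : f₁.Monic)
    (hsplit : (f₁.map (algebraMap K L)).Splits)
    (hdisj : ∀ α ∈ (f₁.map (algebraMap K L)).roots, ∀ β ∈ (f₂.map (algebraMap K L)).roots, α ≠ β) :
    resultantVal v f₁ f₂ =
      ((f₂.map (algebraMap K L)).roots.map fun β => v ((f₁.map (algebraMap K L)).eval β)).sum := by
  set F₁ := f₁.map (algebraMap K L)
  rw [resultantVal, Multiset.sum_map_sum_map]
  refine congrArg Multiset.sum (Multiset.map_congr rfl fun β hβ => WithTop.coe_injective ?_)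
  have hne : F₁.eval β ≠ 0 := fun h =>
    hdisj β ((mem_roots (hmon.map _).ne_zero).2 h) β hβ rfl
  have hprod : F₁.eval β = (F₁.roots.map fun α => β - α).prod := by
    conv_lhs => rw [hsplit.eq_prod_roots_of_monic (hmon.map _)]
    simp [eval_multiset_prod]
  rw [← hvw _ hne, hprod, AddValuation.map_multiset_prod, Multiset.map_map,
    ← WithTop.coe_addHom, map_multiset_sum, Multiset.map_map]
  refine congrArg Multiset.sum (Multiset.map_congr rfl fun α hα => ?_)
  simp only [Function.comp, WithTop.coe_addHom]
  rw [← hvw _ (sub_ne_zero.2 (hdisj α hα β hβ)), ← neg_sub, AddValuation.map_neg]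

theorem coe_one_div_le_of_isEisensteinPoly {f : K[X]} (hf : IsEisensteinPoly v f)
    (hd : 0 < f.natDegree) {β : L} (hβ : β ∈ (f.map (algebraMap K L)).roots) (hβ₀ : 0 ≤ w β) :
    ((1 / f.natDegree : ℚ) : WithTop ℚ) ≤ w β := by
  obtain ⟨hmon, hcoeff, -⟩ := (isEisensteinPoly_iff hvw f).1 hf
  refine WithTop.coe_div_le_of_le_nsmul hd ?_
  have := w.le_nsmul_map_of_isRoot (hmon.map _) (isRoot_of_mem_roots hβ) hβ₀ (c := 1)
    fun i hi => by
      rw [coeff_map]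
      exact hcoeff i (hi.trans_eq (hmon.natDegree_map _))
  rwa [hmon.natDegree_map, ← WithTop.coe_one] at this

theorem coe_three_div_le_map_eval_of_isEisensteinPoly {f₁ f₂ : K[X]} (hmon₁ : f₁.Monic)
    (hdeg₁ : 3 ≤ f₁.natDegree) (hc₀ : 2 ≤ w (algebraMap K L (f₁.coeff 0)))
    (hc : ∀ i < f₁.natDegree, 1 ≤ w (algebraMap K L (f₁.coeff i)))
    (hf₂ : IsEisensteinPoly v f₂) (hdeg₂ : 2 ≤ f₂.natDegree) {β : L}
    (hβ : β ∈ (f₂.map (algebraMap K L)).roots) (hβ₀ : 0 ≤ w β) :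
    ((3 / f₂.natDegree : ℚ) : WithTop ℚ) ≤ w ((f₁.map (algebraMap K L)).eval β) :=
  w.coe_three_div_le_map_eval (hmon₁.map _) (by rwa [hmon₁.natDegree_map])
    (by rwa [coeff_map])
    (fun i hi => by rw [coeff_map]; exact hc i (by rwa [hmon₁.natDegree_map] at hi)) hdeg₂
    (coe_one_div_le_of_isEisensteinPoly hvw hf₂ (by omega) hβ hβ₀)

include hv_int

theorem coe_add_one_le_of_coe_lt {x : K} {n : ℤ}
    (h : ((n : ℚ) : WithTop ℚ) < w (algebraMap K L x)) :
    (((n + 1 : ℤ) : ℚ) : WithTop ℚ) ≤ w (algebraMap K L x) := by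
  by_cases hx : x = 0
  · simp [hx]
  obtain ⟨m, hm⟩ := hv_int x hx
  rw [hvw _ ((_root_.map_ne_zero _).2 hx), hm, WithTop.coe_lt_coe, Int.cast_lt] at h
  rw [hvw _ ((_root_.map_ne_zero _).2 hx), hm, WithTop.coe_le_coe, Int.cast_le]
  exact h

theorem one_le_map_coeff_of_roots_pos {f : K[X]} (hf : f.Monic)
    (hsplit : (f.map (algebraMap K L)).Splits)
    (hroots : ∀ α ∈ (f.map (algebraMap K L)).roots, 0 < w α) {i : ℕ} (hi : i < f.natDegree) :
    1 ≤ w (algebraMap K L (f.coeff i)) := by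
  have hpos := w.map_coeff_pos_of_roots_pos (hf.map _) hsplit hroots
    (hi.trans_eq (hf.natDegree_map _).symm)
  rw [coeff_map] at hpos
  simpa using coe_add_one_le_of_coe_lt hvw hv_int (n := 0) (by simpa using hpos)

theorem two_le_map_coeff_zero_of_not_isEisensteinPoly {f : K[X]} (hf : f.Monic)
    (hcoeff : ∀ i < f.natDegree, 1 ≤ w (algebraMap K L (f.coeff i))) (hd : 0 < f.natDegree)
    (hE : ¬IsEisensteinPoly v f) : 2 ≤ w (algebraMap K L (f.coeff 0)) := by
  have h₁ : 1 < w (algebraMap K L (f.coeff 0)) := (hcoeff 0 hd).lt_of_ne fun h =>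
    hE ((isEisensteinPoly_iff hvw f).2 ⟨hf, hcoeff, h.symm⟩)
  simpa [one_add_one_eq_two] using coe_add_one_le_of_coe_lt hvw hv_int (n := 1) (by simpa using h₁)

end Extension

theorem resultant_val_ge_three_of_eisenstein_general
    {K Kbar : Type*} [Field K] [Field Kbar] [Algebra K Kbar] [IsAlgClosure K Kbar]
    (v : Kbar → ℚ)
    (hv_mul : ∀ x y : Kbar, x ≠ 0 → y ≠ 0 → v (x * y) = v x + v y)
    (hv_add : ∀ x y : Kbar, x ≠ 0 → y ≠ 0 → x + y ≠ 0 → min (v x) (v y) ≤ v (x + y))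
    (hv_int : ∀ x : K, x ≠ 0 → ∃ n : ℤ, v (algebraMap K Kbar x) = (n : ℚ))
    (f₁ f₂ : Polynomial K)
    (hmon₁ : f₁.Monic)
    (hirr₁ : Irreducible f₁) (hirr₂ : Irreducible f₂)
    (hpos₁ : ∀ α ∈ (f₁.map (algebraMap K Kbar)).roots, 0 < v α)
    (hpos₂ : ∀ β ∈ (f₂.map (algebraMap K Kbar)).roots, 0 < v β)
    (hf₁ : ¬ IsEisensteinPoly v f₁) (hdeg₁ : 3 ≤ f₁.natDegree)
    (hf₂ : IsEisensteinPoly v f₂) (hdeg₂ : 2 ≤ f₂.natDegree) :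
    3 ≤ resultantVal v f₁ f₂ := by
  have : IsAlgClosed Kbar := IsAlgClosure.isAlgClosed K
  set w := addValuationOfNeZero v hv_mul hv_add
  have hvw : ∀ x, x ≠ 0 → w x = v x := fun x => addValuationOfNeZero_of_ne_zero v hv_mul hv_add
  have hdisj : ∀ α ∈ (f₁.map (algebraMap K Kbar)).roots,
      ∀ β ∈ (f₂.map (algebraMap K Kbar)).roots, α ≠ β := fun α hα β hβ =>
    ne_of_mem_roots_map_of_irreducible hirr₁ hirr₂ hmon₁ hf₂.1 (fun h => hf₁ (h ▸ hf₂)) hα hβ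
  have hc : ∀ i < f₁.natDegree, 1 ≤ w (algebraMap K Kbar (f₁.coeff i)) := fun i =>
    one_le_map_coeff_of_roots_pos hvw hv_int hmon₁ (IsAlgClosed.splits _)
      fun α hα => addValuationOfNeZero_pos v hv_mul hv_add (hpos₁ α hα)
  have hc₀ := two_le_map_coeff_zero_of_not_isEisensteinPoly hvw hv_int hmon₁ hc (by omega) hf₁
  have hcard : Multiset.card (f₂.map (algebraMap K Kbar)).roots = f₂.natDegree := by
    rw [← (IsAlgClosed.splits _).natDegree_eq_card_roots, hf₂.1.natDegree_map]
  rw [resultantVal_eq_sum_val_eval hvw hmon₁ (IsAlgClosed.splits _) hdisj]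
  refine Multiset.le_sum_map_of_forall_div_card_le (Multiset.card_pos.1 (by omega)) ?_
  intro β hβ
  have hne : (f₁.map (algebraMap K Kbar)).eval β ≠ 0 := fun h =>
    hdisj β ((mem_roots (hmon₁.map _).ne_zero).2 h) β hβ rfl
  rw [← WithTop.coe_le_coe, ← hvw _ hne, hcard]
  exact coe_three_div_le_map_eval_of_isEisensteinPoly hvw hmon₁ hdeg₁ hc₀ hc hf₂ hdeg₂ hβ
    (addValuationOfNeZero_pos v hv_mul hv_add (hpos₂ β hβ)).le

/-- Let `K` be a field, Henselian with respect to a discrete valuation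
`ν_K` with algebraically closed residue field, with fixed algebraic closure `Kbar` and
(unique, Galois-invariant) extension `v` of `ν_K`, normalized so that a uniformizer
`πK` satisfies `v πK = 1` and `v` is `ℤ`-valued on `K`.
Let `f₁, f₂ ∈ O_K[x]` be monic irreducible polynomials all of whose roots in `Kbar`
have strictly positive valuation.  Suppose `f₁` is not Eisenstein and `deg f₁ ≥ 3`,
and `f₂` is Eisenstein with `deg f₂ ≥ 2`.  Then `ν_K(Res(f₁,f₂)) ≥ 3`. -/
theorem resultant_val_ge_three_of_eisenstein
    {K Kbar : Type*} [Field K] [Field Kbar] [Algebra K Kbar] [IsAlgClosure K Kbar]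
    (v : Kbar → ℚ)
    (hv_mul : ∀ x y : Kbar, x ≠ 0 → y ≠ 0 → v (x * y) = v x + v y)
    (hv_add : ∀ x y : Kbar, x ≠ 0 → y ≠ 0 → x + y ≠ 0 → min (v x) (v y) ≤ v (x + y))
    (hv_gal : ∀ (σ : Kbar ≃ₐ[K] Kbar) (x : Kbar), v (σ x) = v x)
    (hv_int : ∀ x : K, x ≠ 0 → ∃ n : ℤ, v (algebraMap K Kbar x) = (n : ℚ))
    (πK : K) (hπK : πK ≠ 0 ∧ v (algebraMap K Kbar πK) = 1)
    (hv_res : ∀ x : Kbar, x ≠ 0 → 0 ≤ v x →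
      ∃ η : K, x = algebraMap K Kbar η ∨ 0 < v (x - algebraMap K Kbar η))
    (f₁ f₂ : Polynomial K)
    (hmon₁ : f₁.Monic) (hmon₂ : f₂.Monic)
    (hirr₁ : Irreducible f₁) (hirr₂ : Irreducible f₂)
    (hcoeff₁ : ∀ n, f₁.coeff n ≠ 0 → 0 ≤ v (algebraMap K Kbar (f₁.coeff n)))
    (hcoeff₂ : ∀ n, f₂.coeff n ≠ 0 → 0 ≤ v (algebraMap K Kbar (f₂.coeff n)))
    (hpos₁ : ∀ α ∈ (f₁.map (algebraMap K Kbar)).roots, 0 < v α)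
    (hpos₂ : ∀ β ∈ (f₂.map (algebraMap K Kbar)).roots, 0 < v β)
    (hf₁ : ¬ IsEisensteinPoly v f₁) (hdeg₁ : 3 ≤ f₁.natDegree)
    (hf₂ : IsEisensteinPoly v f₂) (hdeg₂ : 2 ≤ f₂.natDegree) :
    3 ≤ resultantVal v f₁ f₂ :=
  resultant_val_ge_three_of_eisenstein_general v hv_mul hv_add hv_int f₁ f₂ hmon₁ hirr₁ hirr₂ hpos₁
    hpos₂ hf₁ hdeg₁ hf₂ hdeg₂
end

section
/- Let b/c be a rational number in lowest terms with 0 ≤ b/c < 1 (b ≥ 0, c ≥ 1, gcd(b,c) = 1). Then every shortest 1-path from 1 to b/c has at most c − b + 1 entries. -/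
/-- For an integer `N ≥ 1` and rationals, a list `l` of rationals is an *`N`-path*
from `a` to `a′` if it is a strictly decreasing sequence starting at `a` and ending
at `a′` such that each pair of consecutive entries `x > y` (written in lowest terms
with denominators `x.den`, `y.den`) satisfies
`x − y = N/(lcm(N, x.den) · lcm(N, y.den))`. -/
def IsNPath (N : ℕ) (a a' : ℚ) (l : List ℚ) : Prop :=
  l.head? = some a ∧ l.getLast? = some a' ∧
  l.Chain' (fun x y => x > y ∧
    x - y = (N : ℚ) / ((Nat.lcm N x.den : ℚ) * (Nat.lcm N y.den : ℚ)))

/-- An `N`-path from `a` to `a′` is *shortest* if no proper subsequence of it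
containing both `a` and `a′` is again an `N`-path from `a` to `a′`. -/
def IsShortestNPath (N : ℕ) (a a' : ℚ) (l : List ℚ) : Prop :=
  IsNPath N a a' l ∧
  ∀ l' : List ℚ, l'.Sublist l → l' ≠ l → a ∈ l' → a' ∈ l' → ¬ IsNPath N a a' l'

/-! Consecutive entries `x > y` of a `1`-path are Farey neighbours: `x.num * y.den - y.num * x.den
= 1`. If `x > y > z` are consecutive and `x, z` are not neighbours (which is what shortness
forces), then `D * y.num = x.num + z.num` and `D * y.den = x.den + z.den` with
`D = x.num * z.den - z.num * x.den ≥ 2`. Hence `F q = q.den - q.num` (`denSubNum`) satisfies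
`D * F y = F x + F z`, so `F` strictly increases along the path as long as it is nonnegative.
Since `F 1 = 0` and `F (b / c) = c - b`, the path has at most `c - b` steps. -/

def crossDet (x y : ℚ) : ℤ := x.num * y.den - y.num * x.den

def denSubNum (q : ℚ) : ℤ := q.den - q.num

@[simp] lemma denSubNum_one : denSubNum 1 = 0 := rfl

lemma sub_eq_crossDet_div (x y : ℚ) : x - y = crossDet x y / ((x.den : ℚ) * y.den) := by
  rw [eq_div_iff (by positivity), crossDet]
  push_cast
  rw [← Rat.mul_den_eq_num, ← Rat.mul_den_eq_num]
  ring

lemma crossDet_pos_of_lt {x y : ℚ} (h : y < x) : 0 < crossDet x y := by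
  have hdet : (crossDet x y : ℚ) = (x - y) * ((x.den : ℚ) * y.den) := by
    rw [sub_eq_crossDet_div, div_mul_cancel₀ _ (by positivity)]
  have : (0 : ℚ) < crossDet x y := by
    rw [hdet]
    exact mul_pos (sub_pos.mpr h) (by positivity)
  exact_mod_cast this

def FareyStep (x y : ℚ) : Prop := y < x ∧ crossDet x y = 1

lemma isNPath_one_iff {a a' : ℚ} {l : List ℚ} :
    IsNPath 1 a a' l ↔ l.head? = some a ∧ l.getLast? = some a' ∧ l.IsChain FareyStep := by
  have hstep : ∀ x y : ℚ,
      (x > y ∧ x - y = ((1 : ℕ) : ℚ) / ((Nat.lcm 1 x.den : ℚ) * (Nat.lcm 1 y.den : ℚ))) ↔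
        FareyStep x y := by
    intro x y
    simp only [Nat.lcm_one_left, Nat.cast_one, gt_iff_lt]
    rw [FareyStep, sub_eq_crossDet_div, ← Int.cast_one, div_left_inj' (by positivity)]
    norm_cast
  simp only [IsNPath, hstep]
  rfl

lemma crossDet_mul_denSubNum {x y z : ℚ} (hxy : crossDet x y = 1) (hyz : crossDet y z = 1) :
    crossDet x z * denSubNum y = denSubNum x + denSubNum z := by
  simp only [crossDet, denSubNum] at *
  linear_combination ((z.den : ℤ) - z.num) * hxy + ((x.den : ℤ) - x.num) * hyz

lemma denSubNum_lt_of_fareyStep {x y z : ℚ} (hxy : FareyStep x y) (hyz : FareyStep y z)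
    (hxz : crossDet x z ≠ 1) (hx : 0 ≤ denSubNum x) (hlt : denSubNum x < denSubNum y) :
    denSubNum y < denSubNum z := by
  have hD : 2 ≤ crossDet x z := by
    have := crossDet_pos_of_lt (hyz.1.trans hxy.1)
    omega
  have hmediant := crossDet_mul_denSubNum hxy.2 hyz.2
  nlinarith

/-- No middle entry of three consecutive ones can be dropped keeping a chain of Farey steps. -/
def NoShortcut (l : List ℚ) : Prop :=
  ∀ pre (x y z : ℚ) post, l = pre ++ x :: y :: z :: post → crossDet x z ≠ 1

lemma NoShortcut.tail {a : ℚ} {l : List ℚ} (h : NoShortcut (a :: l)) : NoShortcut l :=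
  fun pre x y z post hl => h (a :: pre) x y z post (by rw [hl, List.cons_append])

lemma noShortcut_of_isShortestNPath {a a' : ℚ} {l : List ℚ} (h : IsShortestNPath 1 a a' l) :
    NoShortcut l := by
  rintro pre x y z post rfl hxz
  obtain ⟨hpath, hmin⟩ := h
  obtain ⟨hhead, hlast, hchain⟩ := isNPath_one_iff.mp hpath
  obtain ⟨hpre, hxy, hrest⟩ := List.isChain_append_cons_cons.mp hchain
  have hyz : FareyStep y z := hrest.rel
  have hhead' : (pre ++ x :: z :: post).head? = some a := by
    cases pre <;> simpa using hhead
  have hlast' : (pre ++ x :: z :: post).getLast? = some a' := by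
    simpa [List.getLast?_append] using hlast
  refine hmin (pre ++ x :: z :: post) ?_ ?_ (List.mem_of_mem_head? hhead')
    (List.mem_of_mem_getLast? hlast') (isNPath_one_iff.mpr ⟨hhead', hlast', ?_⟩)
  · exact (List.sublist_cons_self y _).cons_cons x |>.append_left pre
  · intro he
    simpa using congrArg List.length he
  · exact List.isChain_append_cons_cons.mpr ⟨hpre, ⟨hyz.1.trans hxy.1, hxz⟩, hrest.tail⟩

lemma denSubNum_add_length_le : ∀ (t : List ℚ) (x y : ℚ),
    (x :: y :: t).IsChain FareyStep → NoShortcut (x :: y :: t) →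
    0 ≤ denSubNum x → denSubNum x < denSubNum y →
    denSubNum x + t.length + 1 ≤ denSubNum ((x :: y :: t).getLast (List.cons_ne_nil _ _))
  | [], _, _, _, _, _, hlt => by simpa using hlt
  | z :: t, x, y, hchain, hshort, hx, hlt => by
    have hyz := denSubNum_lt_of_fareyStep hchain.rel hchain.tail.rel
      (hshort [] x y z t rfl) hx hlt
    have := denSubNum_add_length_le t y z hchain.tail hshort.tail (by omega) hyz
    simp only [List.getLast_cons_cons, List.length_cons] at this ⊢
    push_cast
    omega

lemma length_le_denSubNum_add_one {q : ℚ} {l : List ℚ} (hl : IsShortestNPath 1 1 q l) :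
    (l.length : ℤ) ≤ denSubNum q + 1 := by
  have hshort := noShortcut_of_isShortestNPath hl
  obtain ⟨hhead, hlast, hchain⟩ := isNPath_one_iff.mp hl.1
  match l, hhead, hlast, hchain, hshort with
  | [x], hhead, hlast, _, _ =>
    obtain rfl : x = 1 := by simpa using hhead
    obtain rfl : q = 1 := by simpa using hlast.symm
    simp
  | x :: y :: t, hhead, hlast, hchain, hshort =>
    obtain rfl : x = 1 := by simpa using hhead
    have hy : denSubNum y = 1 := by
      simpa [crossDet, denSubNum] using hchain.rel.2
    have := denSubNum_add_length_le t 1 y hchain hshort (by simp) (by simp [hy])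
    rw [List.getLast?_eq_some_getLast (List.cons_ne_nil _ _), Option.some_inj] at hlast
    rw [hlast, denSubNum_one] at this
    simp only [List.length_cons]
    push_cast
    omega

lemma denSubNum_div_of_coprime {b c : ℕ} (hc : 0 < c) (hcop : Nat.Coprime b c) :
    denSubNum ((b : ℚ) / c) = c - b := by
  have hco : Nat.Coprime (b : ℤ).natAbs (c : ℤ).natAbs := hcop
  have hc' : (0 : ℤ) < c := by exact_mod_cast hc
  rw [denSubNum, ← Int.cast_natCast b, ← Int.cast_natCast c,
    Rat.den_div_eq_of_coprime hc' hco, Rat.num_div_eq_of_coprime hc' hco]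

theorem shortest_one_path_from_one_length_le_general
    (b c : ℕ) (hc : 0 < c) (hcop : Nat.Coprime b c)
    (l : List ℚ) (hl : IsShortestNPath 1 1 ((b : ℚ) / (c : ℚ)) l) :
    l.length ≤ c - b + 1 := by
  have := length_le_denSubNum_add_one hl
  rw [denSubNum_div_of_coprime hc hcop] at this
  omega

/-- Let `b/c` be a rational number in lowest terms with
`0 ≤ b/c < 1` (`b ≥ 0`, `c ≥ 1`, `gcd(b,c) = 1`).  Then every shortest `1`-path
from `1` to `b/c` has at most `c − b + 1` entries. -/
theorem shortest_one_path_from_one_length_le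
    (b c : ℕ) (hc : 0 < c) (hcop : Nat.Coprime b c) (hlt : b < c)
    (l : List ℚ) (hl : IsShortestNPath 1 1 ((b : ℚ) / (c : ℚ)) l) :
    l.length ≤ c - b + 1 :=
  shortest_one_path_from_one_length_le_general b c hc hcop l hl
end

section
/- Let b/c be a rational number in lowest terms with 0 < b/c ≤ 1 (b ≥ 1, c ≥ 1, gcd(b,c) = 1). Then every shortest 1-path from b/c to 0 has at most b + 1 entries. -/
def IsNStep (N : ℕ) (x y : ℚ) : Prop :=
  x > y ∧ x - y = (N : ℚ) / ((Nat.lcm N x.den : ℚ) * (Nat.lcm N y.den : ℚ))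

theorem isNPath_iff {N : ℕ} {a a' : ℚ} {l : List ℚ} :
    IsNPath N a a' l ↔ l.head? = some a ∧ l.getLast? = some a' ∧ l.IsChain (IsNStep N) :=
  Iff.rfl

theorem IsShortestNPath.not_isNStep_of_skip {N : ℕ} {a a' x y z : ℚ} {l₁ l₂ : List ℚ}
    (h : IsShortestNPath N a a' (l₁ ++ x :: y :: z :: l₂)) : ¬ IsNStep N x z := by
  intro hxz
  obtain ⟨hpath, hmin⟩ := h
  obtain ⟨hhead, hlast, hchain⟩ := isNPath_iff.mp hpath
  have hsub : (l₁ ++ x :: z :: l₂).Sublist (l₁ ++ x :: y :: z :: l₂) :=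
    ((List.sublist_cons_self y _).cons_cons x).append_left l₁
  have hhead' : (l₁ ++ x :: z :: l₂).head? = some a := by
    simpa [List.head?_append] using hhead
  have hlast' : (l₁ ++ x :: z :: l₂).getLast? = some a' := by
    simpa [List.getLast?_append] using hlast
  refine hmin _ hsub (by simp) (List.mem_of_mem_head? hhead') (List.mem_of_mem_getLast? hlast')
    (isNPath_iff.mpr ⟨hhead', hlast', ?_⟩)
  rw [List.isChain_append_cons_cons] at hchain ⊢
  obtain ⟨h₁, -, h₂⟩ := hchain
  exact ⟨h₁, hxz, (List.isChain_cons_cons.mp h₂).2⟩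

theorem crossDet_eq_one_iff (x y : ℚ) : crossDet x y = 1 ↔ x - y = 1 / (x.den * y.den) := by
  have key : (x - y) * (x.den * y.den) = ((crossDet x y : ℤ) : ℚ) := by
    simp only [crossDet, Int.cast_sub, Int.cast_mul, Int.cast_natCast, ← Rat.mul_den_eq_num]
    ring
  rw [eq_div_iff (by positivity), key]
  exact_mod_cast Iff.rfl

theorem isNStep_one_iff {x y : ℚ} : IsNStep 1 x y ↔ crossDet x y = 1 := by
  simp only [IsNStep, Nat.lcm_one_left, Nat.cast_one, ← crossDet_eq_one_iff]
  refine and_iff_right_of_imp fun h => sub_pos.mp ?_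
  rw [(crossDet_eq_one_iff x y).mp h]
  positivity

theorem crossDet_mul_den {x y z : ℚ} (hxy : crossDet x y = 1) (hyz : crossDet y z = 1) :
    crossDet x z * y.den = x.den + z.den := by
  unfold crossDet at *
  linear_combination (z.den : ℤ) * hxy + (x.den : ℤ) * hyz

theorem two_mul_den_le_of_crossDet_ne_one {x y z : ℚ} (hxy : crossDet x y = 1)
    (hyz : crossDet y z = 1) (hxz : crossDet x z ≠ 1) : 2 * y.den ≤ x.den + z.den := by
  have hmul := crossDet_mul_den hxy hyz
  have hm : 2 ≤ crossDet x z := by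
    have : 0 < crossDet x z := by nlinarith [x.den_pos, y.den_pos]
    omega
  zify
  nlinarith

theorem num_lt_num_of_crossDet_eq_one {x y : ℚ} (h : crossDet x y = 1) (hden : y.den ≤ x.den)
    (hy : 0 ≤ y.num) : y.num < x.num := by
  unfold crossDet at h
  have : (y.den : ℤ) ≤ x.den := by exact_mod_cast hden
  have := y.den_pos
  nlinarith

theorem length_le_num_and_head_den_le {x : ℚ} {t : List ℚ}
    (hchain : (x :: t).IsChain (fun u v => crossDet u v = 1))
    (hskip : ∀ l₁ u v w l₂, x :: t = l₁ ++ u :: v :: w :: l₂ → crossDet u w ≠ 1)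
    (hlast : (x :: t).getLast? = some 0) :
    (t.length : ℤ) ≤ x.num ∧ ∀ y ∈ t.head?, y.den ≤ x.den := by
  induction t generalizing x with
  | nil => simp_all
  | cons y t ih =>
    obtain ⟨hxy, hchain'⟩ := List.isChain_cons_cons.mp hchain
    obtain ⟨ihnum, ihden⟩ := ih hchain'
      (fun l₁ u v w l₂ h => hskip (x :: l₁) u v w l₂ (by rw [h]; rfl))
      (by simpa using hlast)
    have hden : y.den ≤ x.den := by
      cases t with
      | nil =>
        rw [show y = 0 by simpa using hlast, Rat.den_zero]
        exact x.den_pos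
      | cons z t =>
        have := two_mul_den_le_of_crossDet_ne_one hxy (List.isChain_cons_cons.mp hchain').1
          (hskip [] x y z t rfl)
        have := ihden z rfl
        omega
    have := num_lt_num_of_crossDet_eq_one hxy hden (by omega)
    simp only [List.length_cons, Nat.cast_add, Nat.cast_one, List.head?_cons, Option.mem_def,
      Option.some.injEq, forall_eq']
    exact ⟨by omega, hden⟩

theorem shortest_one_path_to_zero_length_le_general
    (b c : ℕ) (hc : 0 < c) (hcop : Nat.Coprime b c)
    (l : List ℚ) (hl : IsShortestNPath 1 ((b : ℚ) / (c : ℚ)) 0 l) :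
    l.length ≤ b + 1 := by
  obtain ⟨hhead, hlast, hchain⟩ := isNPath_iff.mp hl.1
  obtain _ | ⟨x, t⟩ := l
  · simp at hhead
  obtain rfl : x = b / c := by simpa using hhead
  have hskip : ∀ l₁ u v w l₂,
      (b / c : ℚ) :: t = l₁ ++ u :: v :: w :: l₂ → crossDet u w ≠ 1 := by
    rintro l₁ u v w l₂ h huw
    exact (h ▸ hl).not_isNStep_of_skip (isNStep_one_iff.mpr huw)
  have hnum : ((b : ℚ) / c).num = b := by
    simpa using Rat.num_div_eq_of_coprime (a := b) (b := c) (by exact_mod_cast hc) hcop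
  have hlen := (length_le_num_and_head_den_le (hchain.imp fun _ _ => isNStep_one_iff.mp)
    hskip hlast).1
  rw [hnum] at hlen
  simp only [List.length_cons]
  omega

/-- Let `b/c` be a rational number in lowest terms with
`0 < b/c ≤ 1` (`b ≥ 1`, `c ≥ 1`, `gcd(b,c) = 1`).  Then every shortest `1`-path
from `b/c` to `0` has at most `b + 1` entries. -/
theorem shortest_one_path_to_zero_length_le
    (b c : ℕ) (hb : 0 < b) (hc : 0 < c) (hcop : Nat.Coprime b c) (hle : b ≤ c)
    (l : List ℚ) (hl : IsShortestNPath 1 ((b : ℚ) / (c : ℚ)) 0 l) :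
    l.length ≤ b + 1 :=
  shortest_one_path_to_zero_length_le_general b c hc hcop l hl
end

section
/- Let L/K be a finite separable extension inside K̄, let σ ∈ Hom_K(L, K̄) with σ different from the inclusion, and let π_L be a uniformizer of L. Let γ ∈ L and suppose there exists η ∈ K with a := ν_L(γ − η) ≥ 0. Then ν_L(σ(γ) − γ) ≥ ν_L(σ(π_L) − π_L) + a − 1. -/
/-!
Write `i = ν_L(σ π_L − π_L)`. The `x ∈ Lˣ` with `ν_L(σ x − x) ≥ i − 1 + ν_L(x)` form a group,
since `σ(x y) − x y = σ x (σ y − y) + (σ x − x) y`; it contains `Kˣ` and `π_L`, hence every digit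
`c π_L ^ m` with `c ∈ K`. As `L` has the residue field of `K`, each `x ∈ Lˣ` has a leading digit
with `ν_L(x − c π_L ^ m) > ν_L(x)`, and `ν_L` is `ℤ`-valued on `Lˣ` because
`[L : K] ν(x) = ν(N_{L/K} x)`. Peeling off `j` digits proves the bound up to precision
`ν_L(x) + j`, and letting `j → ∞` proves it. Apply this to `x = γ − η`: `σ x − x = σ γ − γ`.
-/

open Module

namespace AddValuation

variable {F : Type*} [Field F]

theorem map_zpow_of_eq_coe (w : AddValuation F (WithTop ℚ)) {x : F} {r : ℚ} (hx : w x = r)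
    (m : ℤ) : w (x ^ m) = ((m * r : ℚ) : WithTop ℚ) := by
  rcases Int.eq_nat_or_neg m with ⟨n, rfl | rfl⟩
  · simp [w.map_pow, hx, ← WithTop.coe_nsmul]
  · rw [zpow_neg, w.map_inv, zpow_natCast, w.map_pow, hx, ← WithTop.coe_nsmul,
      ← WithTop.LinearOrderedAddCommGroup.coe_neg]
    simp

theorem map_prod {Γ : Type*} [LinearOrderedAddCommMonoidWithTop Γ] (w : AddValuation F Γ)
    {ι : Type*} (s : Finset ι) (f : ι → F) : w (∏ i ∈ s, f i) = ∑ i ∈ s, w (f i) := by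
  classical
  induction s using Finset.induction_on with
  | empty => simp
  | insert i s hi ih => rw [Finset.prod_insert hi, Finset.sum_insert hi, w.map_mul, ih]

section ExtendByTop

variable (v : F → ℚ) (hv_mul : ∀ x y : F, x ≠ 0 → y ≠ 0 → v (x * y) = v x + v y)
  (hv_add : ∀ x y : F, x ≠ 0 → y ≠ 0 → x + y ≠ 0 → min (v x) (v y) ≤ v (x + y))

open Classical in
noncomputable def extendByTop : AddValuation F (WithTop ℚ) :=
  AddValuation.of (fun x ↦ if x = 0 then ⊤ else (v x : WithTop ℚ)) (if_pos rfl)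
    (by
      have h := hv_mul 1 1 one_ne_zero one_ne_zero
      rw [mul_one] at h
      simp [show v 1 = 0 by linarith])
    (by
      intro x y
      by_cases hx : x = 0
      · simp [hx]
      by_cases hy : y = 0
      · simp [hy]
      by_cases hxy : x + y = 0
      · simp [hxy]
      simp only [hx, hy, hxy, if_false, ← WithTop.coe_min, WithTop.coe_le_coe]
      exact hv_add x y hx hy hxy)
    (by
      intro x y
      by_cases hx : x = 0
      · simp [hx]
      by_cases hy : y = 0
      · simp [hy]
      simp [hx, hy, hv_mul x y hx hy])

theorem extendByTop_of_ne_zero {x : F} (hx : x ≠ 0) :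
    extendByTop v hv_mul hv_add x = v x :=
  if_neg hx

theorem extendByTop_pos {x : F} (hx : 0 < v x) : 0 < extendByTop v hv_mul hv_add x := by
  by_cases h : x = 0
  · simp [h]
  · simpa [extendByTop_of_ne_zero v hv_mul hv_add h] using hx

end ExtendByTop

end AddValuation

section Embeddings

variable {K F L : Type*} [Field K] [Field F] [Field L] [Algebra K F] [Algebra K L]

theorem apply_algHom_eq_of_forall_algEquiv [Normal K F] [Algebra.IsAlgebraic K L] {α : Type*}
    {f : F → α} (hf : ∀ (τ : F ≃ₐ[K] F) (y : F), f (τ y) = f y) (σ ι : L →ₐ[K] F) (x : L) :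
    f (σ x) = f (ι x) := by
  have hroot : Polynomial.aeval (σ x) (minpoly K (ι x)) = 0 := by
    rw [minpoly.algHom_eq ι ι.injective, Polynomial.aeval_algHom_apply, minpoly.aeval, map_zero]
  obtain ⟨τ, hτ⟩ := minpoly.exists_algEquiv_of_root
    ((Algebra.IsAlgebraic.isAlgebraic x).algHom ι) hroot
  rw [← hτ, hf]

theorem finrank_nsmul_eq_map_norm [IsAlgClosed F] [FiniteDimensional K L]
    [Algebra.IsSeparable K L]
    {Γ : Type*} [LinearOrderedAddCommMonoidWithTop Γ] (w : AddValuation F Γ)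
    (hw : ∀ (σ ι : L →ₐ[K] F) (x : L), w (σ x) = w (ι x)) (ι : L →ₐ[K] F) (x : L) :
    finrank K L • w (ι x) = w (algebraMap K F (Algebra.norm K x)) := by
  rw [Algebra.norm_eq_prod_embeddings, w.map_prod, Finset.sum_congr rfl fun σ _ ↦ hw σ ι x,
    Finset.sum_const, Finset.card_univ, AlgHom.card]

end Embeddings

theorem WithTop.add_le_of_forall_min_natCast_mul_add_le {b c t : WithTop ℚ} {s : ℚ}
    (hs : 0 < s) (h : ∀ j : ℕ, min b ((j * s : ℚ) : WithTop ℚ) + c ≤ t) : b + c ≤ t := by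
  rcases eq_or_ne t ⊤ with rfl | ht
  · exact le_top
  lift t to ℚ using ht
  rcases eq_or_ne c ⊤ with rfl | hc
  · simpa using h 0
  lift c to ℚ using hc
  obtain ⟨j, hj⟩ := exists_nat_gt ((t - c) / s)
  rcases min_choice b ((j * s : ℚ) : WithTop ℚ) with hmin | hmin
  · rw [← hmin]; exact h j
  · have := h j
    rw [hmin, ← WithTop.coe_add, WithTop.coe_le_coe] at this
    rw [div_lt_iff₀ hs] at hj
    linarith

section Displacement

variable {K F L : Type*} [Field K] [Field F] [Field L] [Algebra K F] [Algebra K L]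
  {w : AddValuation F (WithTop ℚ)} {ι σ : L →ₐ[K] F} {β : WithTop ℚ} {x y : L}

variable (w ι σ) in
def IsDisplacementBound (β : WithTop ℚ) (x : L) : Prop :=
  β + w (ι x) ≤ w (σ x - ι x)

theorem isDisplacementBound_zero (β : WithTop ℚ) : IsDisplacementBound w ι σ β 0 := by
  simp [IsDisplacementBound]

theorem isDisplacementBound_algebraMap (β : WithTop ℚ) (c : K) :
    IsDisplacementBound w ι σ β (algebraMap K L c) := by
  simp [IsDisplacementBound]

theorem isDisplacementBound_of_nonpos (hw : ∀ x, w (σ x) = w (ι x)) (hβ : β ≤ 0) (x : L) :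
    IsDisplacementBound w ι σ β x := by
  have h := w.map_sub (σ x) (ι x)
  rw [hw, min_self] at h
  exact le_trans (by simpa using add_le_add hβ (le_refl (w (ι x)))) h

theorem IsDisplacementBound.eq_of_top (h : IsDisplacementBound w ι σ ⊤ x) : σ x = ι x := by
  rw [IsDisplacementBound, top_add, top_le_iff, w.top_iff, sub_eq_zero] at h
  exact h

theorem IsDisplacementBound.mul (hw : ∀ x, w (σ x) = w (ι x))
    (hx : IsDisplacementBound w ι σ β x) (hy : IsDisplacementBound w ι σ β y) :
    IsDisplacementBound w ι σ β (x * y) := by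
  have hsplit : σ (x * y) - ι (x * y) = σ x * (σ y - ι y) + (σ x - ι x) * ι y := by
    simp only [map_mul]; ring
  unfold IsDisplacementBound at *
  rw [hsplit, map_mul, w.map_mul]
  refine le_trans (le_min ?_ ?_) (w.map_add _ _)
  · rw [w.map_mul, hw, add_left_comm]
    gcongr
  · rw [w.map_mul, ← add_assoc]
    gcongr

theorem IsDisplacementBound.inv (hw : ∀ x, w (σ x) = w (ι x))
    (hx : IsDisplacementBound w ι σ β x) : IsDisplacementBound w ι σ β x⁻¹ := by
  rcases eq_or_ne x 0 with rfl | hx0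
  · simpa using isDisplacementBound_zero β
  obtain ⟨r, hr⟩ := WithTop.ne_top_iff_exists.mp (w.ne_top_iff.mpr ((map_ne_zero ι).mpr hx0))
  have hsplit : σ x⁻¹ - ι x⁻¹ = (ι x - σ x) * ((σ x)⁻¹ * (ι x)⁻¹) := by
    rw [map_inv₀, map_inv₀]
    field_simp [(map_ne_zero σ).mpr hx0, (map_ne_zero ι).mpr hx0]
  unfold IsDisplacementBound at *
  rw [hsplit, w.map_mul, w.map_sub_swap, w.map_mul, w.map_inv, w.map_inv, map_inv₀, w.map_inv,
    hw, ← hr, ← WithTop.LinearOrderedAddCommGroup.coe_neg, ← WithTop.coe_add]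
  calc β + ((-r : ℚ) : WithTop ℚ) = β + r + ((-r + -r : ℚ) : WithTop ℚ) := by
        rw [add_assoc, ← WithTop.coe_add]; ring_nf
    _ ≤ w (σ x - ι x) + ((-r + -r : ℚ) : WithTop ℚ) := by
        rw [hr]; gcongr

theorem IsDisplacementBound.pow (hw : ∀ x, w (σ x) = w (ι x))
    (hx : IsDisplacementBound w ι σ β x) (n : ℕ) : IsDisplacementBound w ι σ β (x ^ n) := by
  induction n with
  | zero => simpa using isDisplacementBound_algebraMap (w := w) (ι := ι) (σ := σ) β 1
  | succ n ih => rw [pow_succ]; exact ih.mul hw hx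

theorem IsDisplacementBound.zpow (hw : ∀ x, w (σ x) = w (ι x))
    (hx : IsDisplacementBound w ι σ β x) (m : ℤ) : IsDisplacementBound w ι σ β (x ^ m) := by
  rcases Int.eq_nat_or_neg m with ⟨n, rfl | rfl⟩
  · simpa using hx.pow hw n
  · simpa using (hx.pow hw n).inv hw

end Displacement

section Uniformizer

variable {K F L : Type*} [Field K] [Field F] [Field L] [Algebra K F] [Algebra K L]
  {w : AddValuation F (WithTop ℚ)} {ι σ : L →ₐ[K] F} {π : L} {s : ℚ}

/-- `exists_residue` says that `L/K` has trivial residue field extension. -/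
structure IsTotallyRamifiedUniformizer (w : AddValuation F (WithTop ℚ)) (ι : L →ₐ[K] F) (π : L)
    (s : ℚ) : Prop where
  pos : 0 < s
  map_eq : w (ι π) = s
  exists_map_eq_mul : ∀ x : L, x ≠ 0 → ∃ m : ℤ, w (ι x) = ((m * s : ℚ) : WithTop ℚ)
  exists_residue : ∀ u : L, w (ι u) = 0 → ∃ c : K, 0 < w (ι u - algebraMap K F c)

namespace IsTotallyRamifiedUniformizer

theorem ne_zero (hπ : IsTotallyRamifiedUniformizer w ι π s) : π ≠ 0 := by
  rintro rfl
  simpa using hπ.map_eq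

theorem map_zpow (hπ : IsTotallyRamifiedUniformizer w ι π s) (m : ℤ) :
    w (ι (π ^ m)) = ((m * s : ℚ) : WithTop ℚ) := by
  rw [map_zpow₀, w.map_zpow_of_eq_coe hπ.map_eq]

theorem isDisplacementBound_self (hπ : IsTotallyRamifiedUniformizer w ι π s) :
    IsDisplacementBound w ι σ (w (σ π - ι π) + ((-s : ℚ) : WithTop ℚ)) π := by
  rw [IsDisplacementBound, hπ.map_eq, add_assoc, ← WithTop.coe_add, neg_add_cancel,
    WithTop.coe_zero, add_zero]

/-- The witness is the leading digit `c π ^ m` of `x`. -/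
theorem exists_isDisplacementBound_add_le (hπ : IsTotallyRamifiedUniformizer w ι π s)
    (hw : ∀ x, w (σ x) = w (ι x)) {x : L} (hx : x ≠ 0) :
    ∃ y, IsDisplacementBound w ι σ (w (σ π - ι π) + ((-s : ℚ) : WithTop ℚ)) y ∧
      w (ι x) + s ≤ w (ι (x - y)) := by
  obtain ⟨m, hm⟩ := hπ.exists_map_eq_mul x hx
  obtain ⟨c, hc⟩ := hπ.exists_residue (x * π ^ (-m)) (by
    rw [map_mul, w.map_mul, hm, hπ.map_zpow, ← WithTop.coe_add]
    simp)
  refine ⟨algebraMap K L c * π ^ m,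
    (isDisplacementBound_algebraMap _ c).mul hw (hπ.isDisplacementBound_self.zpow hw m), ?_⟩
  rcases eq_or_ne (x - algebraMap K L c * π ^ m) 0 with h0 | h0
  · rw [h0, map_zero, w.map_zero]
    exact le_top
  obtain ⟨m', hm'⟩ := hπ.exists_map_eq_mul _ h0
  have hsplit : ι (x - algebraMap K L c * π ^ m) =
      ι (π ^ m) * (ι (x * π ^ (-m)) - algebraMap K F c) := by
    have : ι π ≠ 0 := (map_ne_zero ι).mpr hπ.ne_zero
    simp only [map_sub, map_mul, AlgHom.commutes, map_zpow₀]
    rw [zpow_neg]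
    field_simp
  rw [hm, hm', ← WithTop.coe_add, WithTop.coe_le_coe]
  rw [hsplit, w.map_mul, hπ.map_zpow] at hm'
  obtain ⟨d, hd⟩ : ∃ d : ℚ, (d : WithTop ℚ) = w (ι (x * π ^ (-m)) - algebraMap K F c) :=
    WithTop.ne_top_iff_exists.mp fun htop ↦ by
      rw [htop, WithTop.add_top] at hm'
      exact WithTop.top_ne_coe hm'
  rw [← hd, ← WithTop.coe_add, WithTop.coe_eq_coe] at hm'
  rw [← hd, WithTop.coe_pos] at hc
  have hmm' : (m : ℚ) + 1 ≤ m' := by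
    have : m < m' := by
      have : (m : ℚ) * s < m' * s := by linarith
      exact_mod_cast lt_of_mul_lt_mul_right this hπ.pos.le
    exact_mod_cast this
  nlinarith [hπ.pos]

theorem isDisplacementBound_min (hπ : IsTotallyRamifiedUniformizer w ι π s)
    (hw : ∀ x, w (σ x) = w (ι x)) (j : ℕ) (x : L) :
    IsDisplacementBound w ι σ
      (min (w (σ π - ι π) + ((-s : ℚ) : WithTop ℚ)) ((j * s : ℚ) : WithTop ℚ)) x := by
  set β := w (σ π - ι π) + ((-s : ℚ) : WithTop ℚ)
  induction j generalizing x with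
  | zero =>
    exact isDisplacementBound_of_nonpos hw (by simp) x
  | succ j ih =>
    rcases eq_or_ne x 0 with rfl | hx
    · exact isDisplacementBound_zero _
    obtain ⟨y, hy, hxy⟩ := hπ.exists_isDisplacementBound_add_le hw hx
    have hs : (0 : WithTop ℚ) ≤ s := WithTop.coe_nonneg.mpr hπ.pos.le
    have hx_le : w (ι x) ≤ w (ι (x - y)) := le_trans (le_add_of_nonneg_right hs) hxy
    have hy_le : w (ι x) ≤ w (ι y) := by
      have := w.map_sub (ι x) (ι (x - y))
      rwa [← map_sub, sub_sub_cancel, min_eq_left hx_le] at this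
    have hsplit : σ x - ι x = (σ y - ι y) + (σ (x - y) - ι (x - y)) := by
      simp only [map_sub]; ring
    unfold IsDisplacementBound at hy ih ⊢
    rw [hsplit]
    refine le_trans (le_min ?_ ?_) (w.map_add _ _)
    · calc _ ≤ β + w (ι y) := by gcongr; exact min_le_left _ _
        _ ≤ _ := hy
    · calc _ ≤ min β ((j * s : ℚ) : WithTop ℚ) + s + w (ι x) := by
            gcongr
            rw [← min_add_add_right, ← WithTop.coe_add]
            exact min_le_min (le_add_of_nonneg_right hs)
              (WithTop.coe_le_coe.mpr (by push_cast; linarith))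
        _ = min β ((j * s : ℚ) : WithTop ℚ) + (w (ι x) + s) := by
            rw [add_assoc, add_comm (s : WithTop ℚ)]
        _ ≤ min β ((j * s : ℚ) : WithTop ℚ) + w (ι (x - y)) := by gcongr
        _ ≤ _ := ih (x - y)

theorem isDisplacementBound (hπ : IsTotallyRamifiedUniformizer w ι π s)
    (hw : ∀ x, w (σ x) = w (ι x)) (x : L) :
    IsDisplacementBound w ι σ (w (σ π - ι π) + ((-s : ℚ) : WithTop ℚ)) x :=
  WithTop.add_le_of_forall_min_natCast_mul_add_le hπ.pos fun j ↦
    hπ.isDisplacementBound_min hw j x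

end IsTotallyRamifiedUniformizer

end Uniformizer

section ExtendByTopEmbeddings

open AddValuation

variable {K F L : Type*} [Field K] [Field F] [Field L] [Algebra K F] [Algebra K L]
  (v : F → ℚ) (hv_mul : ∀ x y : F, x ≠ 0 → y ≠ 0 → v (x * y) = v x + v y)
  (hv_add : ∀ x y : F, x ≠ 0 → y ≠ 0 → x + y ≠ 0 → min (v x) (v y) ≤ v (x + y))

theorem extendByTop_apply_algHom_eq [Normal K F] [Algebra.IsAlgebraic K L]
    (hv_gal : ∀ (τ : F ≃ₐ[K] F) (y : F), v (τ y) = v y) (σ ι : L →ₐ[K] F) (x : L) :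
    extendByTop v hv_mul hv_add (σ x) = extendByTop v hv_mul hv_add (ι x) := by
  refine apply_algHom_eq_of_forall_algEquiv (fun τ y ↦ ?_) σ ι x
  rcases eq_or_ne y 0 with rfl | hy
  · simp
  rw [extendByTop_of_ne_zero _ _ _ ((map_ne_zero τ).mpr hy), extendByTop_of_ne_zero _ _ _ hy,
    hv_gal]

theorem add_le_of_isDisplacementBound_extendByTop {σ ι : L →ₐ[K] F} {b : ℚ} {x : L}
    (h : IsDisplacementBound (extendByTop v hv_mul hv_add) ι σ b x) (hx : σ x ≠ ι x) :
    b + v (ι x) ≤ v (σ x - ι x) := by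
  have hx0 : ι x ≠ 0 := fun h0 ↦ hx (by simp [(map_eq_zero ι).mp h0])
  rwa [IsDisplacementBound, extendByTop_of_ne_zero _ _ _ hx0,
    extendByTop_of_ne_zero _ _ _ (sub_ne_zero.mpr hx), ← WithTop.coe_add, WithTop.coe_le_coe] at h

theorem isTotallyRamifiedUniformizer_extendByTop [IsAlgClosed F] [FiniteDimensional K L]
    [Algebra.IsSeparable K L]
    (hw : ∀ (σ ι : L →ₐ[K] F) (x : L),
      extendByTop v hv_mul hv_add (σ x) = extendByTop v hv_mul hv_add (ι x))
    (hv_int : ∀ x : K, x ≠ 0 → ∃ n : ℤ, v (algebraMap K F x) = (n : ℚ))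
    (hv_res : ∀ x : F, x ≠ 0 → 0 ≤ v x →
      ∃ η : K, x = algebraMap K F η ∨ 0 < v (x - algebraMap K F η))
    (ι : L →ₐ[K] F) {π : L} (hπ0 : π ≠ 0) (hπ : (finrank K L : ℚ) * v (ι π) = 1) :
    IsTotallyRamifiedUniformizer (extendByTop v hv_mul hv_add) ι π (finrank K L : ℚ)⁻¹ where
  pos := by simpa using finrank_pos
  map_eq := by
    rw [extendByTop_of_ne_zero _ _ _ ((map_ne_zero ι).mpr hπ0), eq_inv_of_mul_eq_one_right hπ]
  exists_map_eq_mul x hx := by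
    obtain ⟨m, hm⟩ := hv_int _ (Algebra.norm_ne_zero_iff.mpr hx)
    refine ⟨m, ?_⟩
    have hnorm := finrank_nsmul_eq_map_norm _ hw ι x
    rw [extendByTop_of_ne_zero _ _ _ ((map_ne_zero ι).mpr hx),
      extendByTop_of_ne_zero _ _ _ (by simpa using hx), hm, ← WithTop.coe_nsmul,
      WithTop.coe_eq_coe, nsmul_eq_mul] at hnorm
    rw [extendByTop_of_ne_zero _ _ _ ((map_ne_zero ι).mpr hx), WithTop.coe_eq_coe, ← hnorm]
    field_simp [finrank_pos.ne']
  exists_residue u hu := by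
    have hu0 : ι u ≠ 0 := by
      rintro h
      simp [h] at hu
    rw [extendByTop_of_ne_zero _ _ _ hu0, WithTop.coe_eq_zero] at hu
    obtain ⟨c, hc | hc⟩ := hv_res (ι u) hu0 hu.ge
    · exact ⟨c, by simp [hc]⟩
    · exact ⟨c, extendByTop_pos _ _ _ hc⟩

end ExtendByTopEmbeddings

theorem val_sigma_sub_lower_bound_general
    {K Kbar : Type*} [Field K] [Field Kbar] [Algebra K Kbar] [IsAlgClosure K Kbar]
    (v : Kbar → ℚ)
    (hv_mul : ∀ x y : Kbar, x ≠ 0 → y ≠ 0 → v (x * y) = v x + v y)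
    (hv_add : ∀ x y : Kbar, x ≠ 0 → y ≠ 0 → x + y ≠ 0 → min (v x) (v y) ≤ v (x + y))
    (hv_gal : ∀ (σ : Kbar ≃ₐ[K] Kbar) (x : Kbar), v (σ x) = v x)
    (hv_int : ∀ x : K, x ≠ 0 → ∃ n : ℤ, v (algebraMap K Kbar x) = (n : ℚ))
    (hv_res : ∀ x : Kbar, x ≠ 0 → 0 ≤ v x →
      ∃ η : K, x = algebraMap K Kbar η ∨ 0 < v (x - algebraMap K Kbar η))
    (L : Type*) [Field L] [Algebra K L] [FiniteDimensional K L]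
    [Algebra.IsSeparable K L]
    (ιL : L →ₐ[K] Kbar)
    (σ : L →ₐ[K] Kbar)
    (πL : L) (hπL : (Module.finrank K L : ℚ) * v (ιL πL) = 1)
    (γ : L) (η : K)
    (a : ℚ) (ha : (Module.finrank K L : ℚ) * v (ιL (γ - algebraMap K L η)) = a) :
    σ γ = ιL γ ∨
      (Module.finrank K L : ℚ) * v (σ πL - ιL πL) + a - 1
        ≤ (Module.finrank K L : ℚ) * v (σ γ - ιL γ) := by
  rcases eq_or_ne (σ γ) (ιL γ) with hγ | hγ
  · exact Or.inl hγ
  right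
  have : IsAlgClosed Kbar := IsAlgClosure.isAlgClosed K
  have : Normal K Kbar := IsAlgClosure.normal K Kbar
  set n : ℚ := (finrank K L : ℚ)
  have hn : 0 < n := by simpa [n] using finrank_pos
  have hw := extendByTop_apply_algHom_eq v hv_mul hv_add hv_gal (L := L)
  set δ := γ - algebraMap K L η
  have hσδ : σ δ - ιL δ = σ γ - ιL γ := by simp only [δ, map_sub, AlgHom.commutes]; ring
  have hσδ0 : σ δ ≠ ιL δ := sub_ne_zero.mp (hσδ ▸ sub_ne_zero.mpr hγ)
  have hvδ : v (ιL δ) = a / n := by rw [eq_div_iff hn.ne', mul_comm, ha]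
  rcases eq_or_ne πL 0 with rfl | hπ0
  -- `hπL` now pins the junk value `v 0 = 1 / n`
  · have hle := add_le_of_isDisplacementBound_extendByTop v hv_mul hv_add
      (isDisplacementBound_of_nonpos (hw σ ιL) (β := ((0 : ℚ) : WithTop ℚ)) le_rfl δ) hσδ0
    rw [zero_add, hσδ, hvδ, div_le_iff₀' hn] at hle
    simp only [map_zero, sub_self] at hπL ⊢
    linarith
  have hB := (isTotallyRamifiedUniformizer_extendByTop v hv_mul hv_add hw hv_int hv_res ιL hπ0
    hπL).isDisplacementBound (hw σ ιL) δ
  have hπσ : σ πL - ιL πL ≠ 0 := fun h ↦ hσδ0 (IsDisplacementBound.eq_of_top (by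
    rwa [h, AddValuation.map_zero, top_add] at hB))
  rw [AddValuation.extendByTop_of_ne_zero _ _ _ hπσ, ← WithTop.coe_add] at hB
  have hle := add_le_of_isDisplacementBound_extendByTop v hv_mul hv_add hB hσδ0
  rw [hσδ, hvδ] at hle
  calc n * v (σ πL - ιL πL) + a - 1 = n * (v (σ πL - ιL πL) + -n⁻¹ + a / n) := by
        field_simp; ring
    _ ≤ n * v (σ γ - ιL γ) := by gcongr

/-- Let `K` be a field, Henselian with respect to a discrete valuation
`ν_K` with algebraically closed residue field, with fixed algebraic closure `Kbar` and
(unique, Galois-invariant) extension `v` of `ν_K`, normalized so that a uniformizer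
`πK` satisfies `v πK = 1` and `v` is `ℤ`-valued on `K`; algebraic closedness of the
residue field is expressed by `hv_res`.

Let `L/K` be a finite separable extension inside `Kbar` (an abstract field `L` with a
`K`-embedding `ιL : L → Kbar`), with normalized valuation `ν_L = [L:K]·ν`, let
`σ ∈ Hom_K(L, Kbar)` differ from the inclusion, and let `π_L` be a uniformizer of `L`.
Let `γ ∈ L` and suppose there exists `η ∈ K` with `a := ν_L(γ − η) ≥ 0`.  Then
`ν_L(σ(γ) − γ) ≥ ν_L(σ(π_L) − π_L) + a − 1` (where a vanishing difference
`σ(γ) = γ` has `ν_L = ∞` and the bound holds trivially). -/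
theorem val_sigma_sub_lower_bound
    {K Kbar : Type*} [Field K] [Field Kbar] [Algebra K Kbar] [IsAlgClosure K Kbar]
    (v : Kbar → ℚ)
    (hv_mul : ∀ x y : Kbar, x ≠ 0 → y ≠ 0 → v (x * y) = v x + v y)
    (hv_add : ∀ x y : Kbar, x ≠ 0 → y ≠ 0 → x + y ≠ 0 → min (v x) (v y) ≤ v (x + y))
    (hv_gal : ∀ (σ : Kbar ≃ₐ[K] Kbar) (x : Kbar), v (σ x) = v x)
    (hv_int : ∀ x : K, x ≠ 0 → ∃ n : ℤ, v (algebraMap K Kbar x) = (n : ℚ))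
    (πK : K) (hπK : πK ≠ 0 ∧ v (algebraMap K Kbar πK) = 1)
    (hv_res : ∀ x : Kbar, x ≠ 0 → 0 ≤ v x →
      ∃ η : K, x = algebraMap K Kbar η ∨ 0 < v (x - algebraMap K Kbar η))
    (L : Type*) [Field L] [Algebra K L] [FiniteDimensional K L]
    [Algebra.IsSeparable K L]
    (ιL : L →ₐ[K] Kbar)
    (σ : L →ₐ[K] Kbar) (hσ : σ ≠ ιL)
    (πL : L) (hπL : (Module.finrank K L : ℚ) * v (ιL πL) = 1)
    (γ : L) (η : K) (hγη : γ ≠ algebraMap K L η)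
    (a : ℚ) (ha : (Module.finrank K L : ℚ) * v (ιL (γ - algebraMap K L η)) = a)
    (ha0 : 0 ≤ a) :
    σ γ = ιL γ ∨
      (Module.finrank K L : ℚ) * v (σ πL - ιL πL) + a - 1
        ≤ (Module.finrank K L : ℚ) * v (σ γ - ιL γ) :=
  val_sigma_sub_lower_bound_general v hv_mul hv_add hv_gal hv_int hv_res L ιL σ πL hπL γ η a ha
end

section
/- Let α ∈ K^sep with ν_K(α) = b/c written in lowest terms (b, c coprime positive integers), and suppose [K(α):K] = c. If c = 2, then db_K(α) ≥ b − 1. If c ≥ 3 and b ≥ 3, then db_K(α) ≥ 2(⌊b/c⌋ + c − 1), and equality can hold in this case only if b = 3 or b/c = 4/3. -/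
/-!
For distinct `K`-embeddings `σ, τ` of `L`, every integral `x ∈ L` satisfies
`v (σ x - τ x) ≥ v (σ π - τ π)`: since the residue field is algebraically closed, `x` is
approximated to any precision by polynomials in `π` with integral coefficients in `K`,
and `σ (p π) - τ (p π)` is a multiple of `σ π - τ π` by an integral element.
Writing `α = w π ^ b` with `w` a unit, the identity
`σ α - τ α = σ w (σ π ^ b - τ π ^ b) + (σ w - τ w) τ π ^ b` gives
`v (σ α - τ α) ≥ v (σ π - τ π) + (b - 1) / c`. Summing over the `c (c - 1)` ordered pairs
yields `db ≥ (b - 1)(c - 1)`, and for coprime `b, c ≥ 3` this exceeds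
`2 (⌊b/c⌋ + c - 1)` unless `b = 3` or `(b, c) = (4, 3)`.
-/

open Polynomial Finset
open scoped Classical

namespace DiscriminantBonus

open Module

section Valuation

variable {Kbar : Type*} [Field Kbar] (v : Kbar → ℚ)
  (hv_mul : ∀ x y : Kbar, x ≠ 0 → y ≠ 0 → v (x * y) = v x + v y)
  (hv_add : ∀ x y : Kbar, x ≠ 0 → y ≠ 0 → x + y ≠ 0 → min (v x) (v y) ≤ v (x + y))

include hv_mul in
lemma v_one : v 1 = 0 := by
  have h := hv_mul 1 1 one_ne_zero one_ne_zero
  rw [mul_one] at h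
  linarith

include hv_mul in
lemma v_neg (x : Kbar) : v (-x) = v x := by
  rcases eq_or_ne x 0 with rfl | hx
  · rw [neg_zero]
  have h1 := hv_mul (-1) (-1) (by simp) (by simp)
  rw [neg_one_mul, neg_neg, v_one v hv_mul] at h1
  rw [← neg_one_mul, hv_mul _ _ (by simp) hx]
  linarith

include hv_mul in
lemma v_pow {x : Kbar} (hx : x ≠ 0) (n : ℕ) : v (x ^ n) = n * v x := by
  induction n with
  | zero => simp [v_one v hv_mul]
  | succ n ih =>
    rw [pow_succ, hv_mul _ _ (pow_ne_zero _ hx) hx, ih]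
    push_cast; ring

include hv_mul in
lemma v_div {x y : Kbar} (hx : x ≠ 0) (hy : y ≠ 0) : v (x / y) = v x - v y := by
  have h := hv_mul (x / y) y (div_ne_zero hx hy) hy
  rw [div_mul_cancel₀ _ hy] at h
  linarith

include hv_mul in
lemma v_prod {ι : Type*} {s : Finset ι} {f : ι → Kbar} (h : ∀ i ∈ s, f i ≠ 0) :
    v (∏ i ∈ s, f i) = ∑ i ∈ s, v (f i) := by
  induction s using Finset.induction_on with
  | empty => simp [v_one v hv_mul]
  | insert a s ha ih =>
    rw [prod_insert ha, sum_insert ha, hv_mul _ _ (h a (mem_insert_self a s))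
      (prod_ne_zero_iff.2 fun i hi => h i (mem_insert_of_mem hi)),
      ih fun i hi => h i (mem_insert_of_mem hi)]

/-- `v 0` is unconstrained, so lower bounds are phrased as "zero, or of valuation at least `r`". -/
def ValGE (r : ℚ) (x : Kbar) : Prop := x = 0 ∨ r ≤ v x

variable {v}

lemma ValGE.zero (r : ℚ) : ValGE v r 0 := Or.inl rfl

lemma ValGE.mono {r s : ℚ} {x : Kbar} (h : ValGE v s x) (hrs : r ≤ s) : ValGE v r x :=
  h.imp_right hrs.trans

include hv_add in
lemma ValGE.add {r : ℚ} {x y : Kbar} (hx : ValGE v r x) (hy : ValGE v r y) :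
    ValGE v r (x + y) := by
  rcases eq_or_ne x 0 with rfl | hx0
  · rwa [zero_add]
  rcases eq_or_ne y 0 with rfl | hy0
  · rwa [add_zero]
  rcases eq_or_ne (x + y) 0 with h0 | h0
  · exact Or.inl h0
  exact Or.inr
    ((le_min (hx.resolve_left hx0) (hy.resolve_left hy0)).trans (hv_add x y hx0 hy0 h0))

include hv_mul in
lemma ValGE.neg {r : ℚ} {x : Kbar} (hx : ValGE v r x) : ValGE v r (-x) := by
  simpa [ValGE, v_neg v hv_mul] using hx

include hv_mul hv_add in
lemma ValGE.sub {r : ℚ} {x y : Kbar} (hx : ValGE v r x) (hy : ValGE v r y) :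
    ValGE v r (x - y) := by
  simpa only [sub_eq_add_neg] using hx.add hv_add (hy.neg hv_mul)

include hv_mul in
lemma ValGE.mul {r s : ℚ} {x y : Kbar} (hx : ValGE v r x) (hy : ValGE v s y) :
    ValGE v (r + s) (x * y) := by
  rcases eq_or_ne x 0 with rfl | hx0
  · simp [ValGE]
  rcases eq_or_ne y 0 with rfl | hy0
  · simp [ValGE]
  exact Or.inr (by
    rw [hv_mul x y hx0 hy0]; exact add_le_add (hx.resolve_left hx0) (hy.resolve_left hy0))

include hv_add in
lemma ValGE.sum {ι : Type*} {s : Finset ι} {r : ℚ} {f : ι → Kbar}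
    (h : ∀ i ∈ s, ValGE v r (f i)) : ValGE v r (∑ i ∈ s, f i) := by
  induction s using Finset.induction_on with
  | empty => exact ValGE.zero r
  | insert a s ha ih =>
    rw [sum_insert ha]
    exact (h a (mem_insert_self a s)).add hv_add (ih fun i hi => h i (mem_insert_of_mem hi))

include hv_mul in
lemma ValGE.pow {s : ℚ} {x : Kbar} (hx : ValGE v s x) (n : ℕ) : ValGE v (n * s) (x ^ n) := by
  induction n with
  | zero => exact Or.inr (by simp [v_one v hv_mul])
  | succ n ih => simpa [pow_succ, add_mul] using ih.mul hv_mul hx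

include hv_mul hv_add in
lemma ValGE.pow_succ_sub_pow_succ {r s : ℚ} {x y : Kbar} (hx : ValGE v s x)
    (hy : ValGE v s y) (hxy : ValGE v r (x - y)) (n : ℕ) :
    ValGE v (r + n * s) (x ^ (n + 1) - y ^ (n + 1)) := by
  induction n with
  | zero => simpa using hxy
  | succ n ih =>
    have h₁ := hx.mul hv_mul ih
    have h₂ := hxy.mul hv_mul (hy.pow hv_mul (n + 1))
    have h : ValGE v (r + (n + 1 : ℕ) * s)
        (x * (x ^ (n + 1) - y ^ (n + 1)) + (x - y) * y ^ (n + 1)) :=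
      (h₁.mono (by push_cast; linarith)).add hv_add h₂
    rwa [show x ^ (n + 1 + 1) - y ^ (n + 1 + 1)
      = x * (x ^ (n + 1) - y ^ (n + 1)) + (x - y) * y ^ (n + 1) by ring]

include hv_mul hv_add in
lemma ValGE.aeval_sub_aeval {K : Type*} [Field K] [Algebra K Kbar] {p : K[X]}
    (hp : ∀ i, ValGE v 0 (algebraMap K Kbar (p.coeff i))) {r : ℚ} {x y : Kbar}
    (hx : ValGE v 0 x) (hy : ValGE v 0 y) (hxy : ValGE v r (x - y)) :
    ValGE v r (aeval x p - aeval y p) := by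
  rw [aeval_eq_sum_range, aeval_eq_sum_range, ← sum_sub_distrib]
  refine ValGE.sum hv_add fun i _ => ?_
  rw [Algebra.smul_def, Algebra.smul_def, ← mul_sub]
  cases i with
  | zero => simp [ValGE]
  | succ n =>
    simpa using (hp (n + 1)).mul hv_mul (hx.pow_succ_sub_pow_succ hv_mul hv_add hy hxy n)

include hv_mul hv_add in
lemma exists_residue_approx {K : Type*} [Field K] [Algebra K Kbar]
    (hv_res : ∀ x : Kbar, x ≠ 0 → 0 ≤ v x →
      ∃ η : K, x = algebraMap K Kbar η ∨ 0 < v (x - algebraMap K Kbar η))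
    {ξ : Kbar} (hξ : ValGE v 0 ξ) :
    ∃ η : K, ValGE v 0 (algebraMap K Kbar η) ∧
      (ξ = algebraMap K Kbar η ∨ 0 < v (ξ - algebraMap K Kbar η)) := by
  rcases eq_or_ne ξ 0 with rfl | hξ0
  · exact ⟨0, by simp [ValGE]⟩
  obtain ⟨η, hη⟩ := hv_res ξ hξ0 (hξ.resolve_left hξ0)
  have hdiff : ValGE v 0 (ξ - algebraMap K Kbar η) :=
    hη.imp sub_eq_zero.2 le_of_lt
  refine ⟨η, ?_, hη⟩
  simpa using hξ.sub hv_mul hv_add hdiff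

end Valuation

section Extension

variable {K Kbar : Type*} [Field K] [Field Kbar] [Algebra K Kbar] {v : Kbar → ℚ}
  (hv_mul : ∀ x y : Kbar, x ≠ 0 → y ≠ 0 → v (x * y) = v x + v y)
  (hv_add : ∀ x y : Kbar, x ≠ 0 → y ≠ 0 → x + y ≠ 0 → min (v x) (v y) ≤ v (x + y))
  (hv_gal : ∀ (σ : Kbar ≃ₐ[K] Kbar) (x : Kbar), v (σ x) = v x)
  (hv_int : ∀ x : K, x ≠ 0 → ∃ n : ℤ, v (algebraMap K Kbar x) = (n : ℚ))
  (hv_res : ∀ x : Kbar, x ≠ 0 → 0 ≤ v x →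
      ∃ η : K, x = algebraMap K Kbar η ∨ 0 < v (x - algebraMap K Kbar η))

include hv_gal in
lemma v_algHom_eq [Normal K Kbar] {L : Type*} [Field L] [Algebra K L] (σ τ : L →ₐ[K] Kbar)
    (x : L) : v (σ x) = v (τ x) := by
  have hconj : IsConjRoot K (τ x) (σ x) := by
    rw [IsConjRoot, minpoly.algHom_eq σ σ.injective x, minpoly.algHom_eq τ τ.injective x]
  obtain ⟨g, hg⟩ := hconj.exists_algEquiv
  rw [← hg, hv_gal]

include hv_gal in
lemma ValGE.algHom [Normal K Kbar] {L : Type*} [Field L] [Algebra K L] {ι : L →ₐ[K] Kbar}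
    {r : ℚ} {x : L} (h : ValGE v r (ι x)) (σ : L →ₐ[K] Kbar) : ValGE v r (σ x) := by
  simpa [ValGE, v_algHom_eq hv_gal σ ι] using h

lemma isSeparable_of_adjoin_eq_top {L : Type*} [Field L] [Algebra K L] {x : L}
    (hx : IsSeparable K x) (hgen : Algebra.adjoin K {x} = ⊤) : Algebra.IsSeparable K L := by
  have htop : IntermediateField.adjoin K {x} = ⊤ :=
    IntermediateField.adjoin_eq_top_of_algebra K _ hgen
  have := (IntermediateField.isSeparable_adjoin_simple_iff_isSeparable K L).2 hx
  rw [htop] at this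
  exact .of_algHom K _ (IntermediateField.topEquiv (F := K) (E := L)).symm.toAlgHom

variable {L : Type*} [Field L] [Algebra K L] [FiniteDimensional K L] [Algebra.IsSeparable K L]
  (ιL : L →ₐ[K] Kbar)

include hv_mul hv_gal hv_int in
lemma exists_int_finrank_mul_v_eq [IsAlgClosed Kbar] [Normal K Kbar] {x : L} (hx : x ≠ 0) :
    ∃ n : ℤ, (finrank K L : ℚ) * v (ιL x) = n := by
  obtain ⟨n, hn⟩ := hv_int _ (Algebra.norm_ne_zero_iff.2 hx)
  refine ⟨n, ?_⟩
  rw [← hn, Algebra.norm_eq_prod_embeddings K Kbar x,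
    v_prod v hv_mul fun σ _ => (map_ne_zero σ).2 hx,
    sum_congr rfl fun σ _ => v_algHom_eq hv_gal σ ιL x, sum_const, card_univ,
    AlgHom.card K L Kbar, nsmul_eq_mul]

include hv_mul hv_gal hv_int in
lemma add_one_div_finrank_le_of_lt [IsAlgClosed Kbar] [Normal K Kbar] {x : L} (hx : x ≠ 0)
    {t : ℕ} (ht : (t : ℚ) / finrank K L < v (ιL x)) :
    ((t : ℚ) + 1) / finrank K L ≤ v (ιL x) := by
  have hc : (0 : ℚ) < finrank K L := by exact_mod_cast finrank_pos
  obtain ⟨n, hn⟩ := exists_int_finrank_mul_v_eq hv_mul hv_gal hv_int ιL hx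
  rw [div_lt_iff₀' hc, hn] at ht
  rw [div_le_iff₀' hc, hn]
  have ht' : (t : ℤ) < n := by exact_mod_cast ht
  exact_mod_cast (show (t : ℤ) + 1 ≤ n by omega)

variable {ιL} {π : L} (hπ : v (ιL π) = 1 / finrank K L)

include hv_mul hv_add hv_gal hv_int hv_res hπ in
lemma exists_sub_mul_pow_valGE [IsAlgClosed Kbar] [Normal K Kbar] (hπ0 : π ≠ 0) {t : ℕ}
    {e : L} (he : ValGE v (t / finrank K L) (ιL e)) :
    ∃ η : K, ValGE v 0 (algebraMap K Kbar η) ∧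
      ValGE v (((t : ℚ) + 1) / finrank K L) (ιL (e - algebraMap K L η * π ^ t)) := by
  have hπt : ιL π ^ t ≠ 0 := pow_ne_zero _ ((map_ne_zero ιL).2 hπ0)
  set ξ := ιL e / ιL π ^ t with hξ_def
  have hξ : ValGE v 0 ξ := by
    rcases eq_or_ne (ιL e) 0 with h | h
    · exact Or.inl (by simp [ξ, h])
    · refine Or.inr ?_
      rw [v_div v hv_mul h hπt, v_pow v hv_mul ((map_ne_zero ιL).2 hπ0), hπ, mul_one_div]
      linarith [he.resolve_left h]
  obtain ⟨η, hη, hξη⟩ := exists_residue_approx hv_mul hv_add hv_res hξ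
  refine ⟨η, hη, ?_⟩
  have hkey : ιL (e - algebraMap K L η * π ^ t) = (ξ - algebraMap K Kbar η) * ιL π ^ t := by
    rw [sub_mul, hξ_def, div_mul_cancel₀ _ hπt]
    simp
  rcases eq_or_ne (e - algebraMap K L η * π ^ t) 0 with h0 | h0
  · exact Or.inl (by rw [h0, map_zero])
  have hne : ξ - algebraMap K Kbar η ≠ 0 := by
    rintro h
    exact h0 ((map_eq_zero ιL).1 (by rw [hkey, h, zero_mul]))
  refine Or.inr (add_one_div_finrank_le_of_lt hv_mul hv_gal hv_int ιL h0 ?_)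
  rw [hkey, hv_mul _ _ hne hπt, v_pow v hv_mul ((map_ne_zero ιL).2 hπ0), hπ, mul_one_div]
  linarith [hξη.resolve_left (sub_ne_zero.1 hne)]

include hv_mul hv_add hv_gal hv_int hv_res hπ in
lemma exists_aeval_approx [IsAlgClosed Kbar] [Normal K Kbar] (hπ0 : π ≠ 0) {x : L}
    (hx : ValGE v 0 (ιL x)) (t : ℕ) :
    ∃ p : K[X], (∀ i, ValGE v 0 (algebraMap K Kbar (p.coeff i))) ∧
      ValGE v (t / finrank K L) (ιL (x - aeval π p)) := by
  induction t with
  | zero => exact ⟨0, fun i => by simp [ValGE], by simpa using hx⟩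
  | succ t ih =>
    obtain ⟨p, hp, hxp⟩ := ih
    obtain ⟨η, hη, hstep⟩ :=
      exists_sub_mul_pow_valGE hv_mul hv_add hv_gal hv_int hv_res hπ hπ0 hxp
    refine ⟨p + C η * X ^ t, fun i => ?_, ?_⟩
    · rw [coeff_add, coeff_C_mul_X_pow, map_add]
      refine (hp i).add hv_add ?_
      split_ifs
      · exact hη
      · simp [ValGE]
    · have hsub :
          x - aeval π (p + C η * X ^ t) = x - aeval π p - algebraMap K L η * π ^ t := by
        simp only [map_add, map_mul, aeval_C, map_pow, aeval_X]
        ring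
      rw [hsub]
      exact_mod_cast hstep

include hv_mul hv_add hv_gal hv_int hv_res hπ in
lemma ValGE.algHom_sub_algHom [IsAlgClosed Kbar] [Normal K Kbar] (hπ0 : π ≠ 0) {x : L}
    (hx : ValGE v 0 (ιL x)) (σ τ : L →ₐ[K] Kbar) :
    ValGE v (v (σ π - τ π)) (σ x - τ x) := by
  set r := v (σ π - τ π)
  have hc : (0 : ℚ) < finrank K L := by exact_mod_cast finrank_pos
  obtain ⟨t, ht⟩ := exists_nat_ge (r * finrank K L)
  obtain ⟨p, hp, hxp⟩ := exists_aeval_approx hv_mul hv_add hv_gal hv_int hv_res hπ hπ0 hx t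
  have hπ_int : ValGE v 0 (ιL π) := Or.inr (by rw [hπ]; positivity)
  have hpoly : ValGE v r (σ (aeval π p) - τ (aeval π p)) := by
    rw [← aeval_algHom_apply, ← aeval_algHom_apply]
    exact .aeval_sub_aeval hv_mul hv_add hp (hπ_int.algHom hv_gal σ) (hπ_int.algHom hv_gal τ)
      (Or.inr le_rfl)
  have herr := hxp.mono ((le_div_iff₀ hc).2 ht)
  have hrest := (herr.algHom hv_gal σ).sub hv_mul hv_add (herr.algHom hv_gal τ)
  convert hpoly.add hv_add hrest using 1
  simp only [map_sub]
  ring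

include hv_mul hv_add hv_gal hv_int hv_res hπ in
lemma ValGE.algHom_sub_algHom_mul_pow [IsAlgClosed Kbar] [Normal K Kbar] (hπ0 : π ≠ 0)
    {w : L} (hw : ValGE v 0 (ιL w)) (n : ℕ) (σ τ : L →ₐ[K] Kbar) :
    ValGE v (v (σ π - τ π) + n / finrank K L)
      (σ (w * π ^ (n + 1)) - τ (w * π ^ (n + 1))) := by
  have hπ' : ValGE v (1 / finrank K L) (ιL π) := Or.inr hπ.ge
  have hpow := ((hπ'.algHom hv_gal σ).pow_succ_sub_pow_succ hv_mul hv_add (hπ'.algHom hv_gal τ)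
    (Or.inr le_rfl) n)
  have h₁ := (hw.algHom hv_gal σ).mul hv_mul hpow
  have h₂ := (hw.algHom_sub_algHom hv_mul hv_add hv_gal hv_int hv_res hπ hπ0 σ τ).mul hv_mul
    ((hπ'.algHom hv_gal τ).pow hv_mul (n + 1))
  have h : ValGE v (v (σ π - τ π) + n / finrank K L)
      (σ w * (σ π ^ (n + 1) - τ π ^ (n + 1)) + (σ w - τ w) * τ π ^ (n + 1)) := by
    refine (h₁.mono (le_of_eq (by ring))).add hv_add (h₂.mono ?_)
    push_cast
    rw [mul_one_div]
    gcongr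
    linarith
  convert h using 1
  simp only [map_mul, map_pow]
  ring

include hv_mul hv_add hv_gal hv_int hv_res hπ in
lemma ValGE.algHom_sub_algHom_of_v_eq [IsAlgClosed Kbar] [Normal K Kbar] {α : L}
    (hα0 : α ≠ 0) {b : ℕ} (hb : 0 < b) (hα : v (ιL α) = b / finrank K L)
    (σ τ : L →ₐ[K] Kbar) :
    ValGE v (v (σ π - τ π) + ((b : ℚ) - 1) / finrank K L) (σ α - τ α) := by
  obtain ⟨n, rfl⟩ : ∃ n, b = n + 1 := ⟨b - 1, by omega⟩
  have hb' : ((n + 1 : ℕ) : ℚ) - 1 = n := by push_cast; ring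
  rw [hb']
  rcases eq_or_ne π 0 with rfl | hπ0
  · -- `π = 0` is not excluded; then `hπ` says `v 0 = 1 / [L : K]`
    have hα' : ValGE v ((n + 1 : ℕ) / finrank K L) (ιL α) := Or.inr hα.ge
    have h := (hα'.algHom hv_gal σ).sub hv_mul hv_add (hα'.algHom hv_gal τ)
    rw [map_zero] at hπ
    refine h.mono (le_of_eq ?_)
    rw [map_zero, map_zero, sub_zero, hπ]
    push_cast
    ring
  have hπn : ιL π ^ (n + 1) ≠ 0 := pow_ne_zero _ ((map_ne_zero ιL).2 hπ0)
  have hw : ValGE v 0 (ιL (α / π ^ (n + 1))) := Or.inr (by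
    rw [map_div₀, map_pow, v_div v hv_mul ((map_ne_zero ιL).2 hα0) hπn,
      v_pow v hv_mul ((map_ne_zero ιL).2 hπ0), hα, hπ]
    push_cast
    exact le_of_eq (by ring))
  have h := hw.algHom_sub_algHom_mul_pow hv_mul hv_add hv_gal hv_int hv_res hπ hπ0 n σ τ
  rwa [div_mul_cancel₀ _ (pow_ne_zero _ hπ0)] at h

variable (K v) in
/-- `db_K(α)` when `π` is a uniformizer of `L`. -/
noncomputable def discriminantBonus (α π : L) : ℚ :=
  ∑ p ∈ (univ : Finset (L →ₐ[K] Kbar)).offDiag, (v (p.1 α - p.2 α) - v (p.1 π - p.2 π))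

include hv_mul hv_add hv_gal hv_int hv_res hπ in
lemma mul_le_discriminantBonus [IsAlgClosed Kbar] [Normal K Kbar] {α : L} (hα0 : α ≠ 0)
    (hgen : Algebra.adjoin K {α} = ⊤) {b : ℕ} (hb : 0 < b)
    (hα : v (ιL α) = b / finrank K L) :
    ((b : ℚ) - 1) * (finrank K L - 1) ≤ discriminantBonus K v α π := by
  have hc : (0 : ℚ) < finrank K L := by exact_mod_cast finrank_pos
  have hpair : ∀ p ∈ (univ : Finset (L →ₐ[K] Kbar)).offDiag,
      ((b : ℚ) - 1) / finrank K L ≤ v (p.1 α - p.2 α) - v (p.1 π - p.2 π) := by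
    rintro ⟨σ, τ⟩ hστ
    have hne : σ α - τ α ≠ 0 := sub_ne_zero.2 fun h =>
      (mem_offDiag.1 hστ).2.2 (AlgHom.ext_of_adjoin_eq_top hgen (Set.eqOn_singleton.2 h))
    have := ValGE.algHom_sub_algHom_of_v_eq hv_mul hv_add hv_gal hv_int hv_res hπ hα0 hb hα σ τ
    linarith [this.resolve_left hne]
  have hcard : ((univ : Finset (L →ₐ[K] Kbar)).offDiag.card : ℚ) =
      finrank K L * (finrank K L - 1) := by
    rw [offDiag_card, card_univ, AlgHom.card K L Kbar, Nat.cast_sub (Nat.le_mul_self _)]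
    push_cast
    ring
  calc ((b : ℚ) - 1) * (finrank K L - 1)
      = (univ : Finset (L →ₐ[K] Kbar)).offDiag.card • (((b : ℚ) - 1) / finrank K L) := by
        rw [nsmul_eq_mul, hcard]
        field_simp
    _ ≤ discriminantBonus K v α π := card_nsmul_le_sum _ _ _ hpair

end Extension

lemma two_mul_div_add_sub_one_le_mul {b c : ℕ} (hb : 3 ≤ b) (hc : 3 ≤ c)
    (hcop : b.Coprime c) :
    2 * (b / c + c - 1) ≤ (b - 1) * (c - 1) ∧
      (2 * (b / c + c - 1) = (b - 1) * (c - 1) → b = 3 ∨ b = 4 ∧ c = 3) := by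
  rcases (by omega : b = 3 ∨ b = 4 ∨ 5 ≤ b) with rfl | rfl | hb5
  · have hc4 : 4 ≤ c := by
      by_contra h
      obtain rfl : c = 3 := by omega
      norm_num at hcop
    rw [Nat.div_eq_of_lt (by omega)]
    omega
  · rcases (by omega : c = 3 ∨ c = 4 ∨ 5 ≤ c) with rfl | rfl | hc5
    · norm_num
    · norm_num at hcop
    · rw [Nat.div_eq_of_lt (by omega)]
      omega
  · have hq : 3 * (b / c) ≤ b :=
      (Nat.mul_le_mul_right _ hc).trans ((mul_comm c _).le.trans (Nat.div_mul_le_self b c))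
    have hlt : 2 * (b / c + c - 1) < (b - 1) * (c - 1) := by
      zify [(by omega : 1 ≤ b), (by omega : 1 ≤ c), (by omega : 1 ≤ b / c + c)]
      nlinarith
    exact ⟨hlt.le, fun h => absurd h hlt.ne⟩

end DiscriminantBonus

theorem discriminant_bonus_length_one_general
    {K Kbar : Type*} [Field K] [Field Kbar] [Algebra K Kbar] [IsAlgClosure K Kbar]
    (v : Kbar → ℚ)
    (hv_mul : ∀ x y : Kbar, x ≠ 0 → y ≠ 0 → v (x * y) = v x + v y)
    (hv_add : ∀ x y : Kbar, x ≠ 0 → y ≠ 0 → x + y ≠ 0 → min (v x) (v y) ≤ v (x + y))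
    (hv_gal : ∀ (σ : Kbar ≃ₐ[K] Kbar) (x : Kbar), v (σ x) = v x)
    (hv_int : ∀ x : K, x ≠ 0 → ∃ n : ℤ, v (algebraMap K Kbar x) = (n : ℚ))
    (hv_res : ∀ x : Kbar, x ≠ 0 → 0 ≤ v x →
      ∃ η : K, x = algebraMap K Kbar η ∨ 0 < v (x - algebraMap K Kbar η))
    (α : Kbar) (hα0 : α ≠ 0) (hsep : (minpoly K α).Separable)
    (b c : ℕ) (hb : 0 < b) (hc : 0 < c) (hcop : Nat.Coprime b c)
    (hval : v α = (b : ℚ) / (c : ℚ))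
    (L : Type*) [Field L] [Algebra K L] [FiniteDimensional K L]
    (ιL : L →ₐ[K] Kbar)
    (αL : L) (hαL : ιL αL = α) (hgen : Algebra.adjoin K {αL} = ⊤)
    (hdeg : Module.finrank K L = c)
    (πL : L) (hπL : (c : ℚ) * v (ιL πL) = 1)
    (db : ℚ)
    (hdb : db =
      (∑ p ∈ (univ : Finset ((L →ₐ[K] Kbar) × (L →ₐ[K] Kbar))).filter
          (fun p => p.1 ≠ p.2), v (p.1 αL - p.2 αL))
      - (∑ p ∈ (univ : Finset ((L →ₐ[K] Kbar) × (L →ₐ[K] Kbar))).filter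
          (fun p => p.1 ≠ p.2), v (p.1 πL - p.2 πL))) :
    (c = 2 → (b : ℚ) - 1 ≤ db) ∧
    (3 ≤ c → 3 ≤ b →
      ((2 * (b / c + c - 1) : ℕ) : ℚ) ≤ db ∧
      (db = ((2 * (b / c + c - 1) : ℕ) : ℚ) → b = 3 ∨ (b = 4 ∧ c = 3))) := by
  have := IsAlgClosure.isAlgClosed K (K := Kbar)
  have := IsAlgClosure.normal K Kbar
  have : Algebra.IsSeparable K L := DiscriminantBonus.isSeparable_of_adjoin_eq_top
    (by rwa [IsSeparable, ← minpoly.algHom_eq ιL ιL.injective, hαL]) hgen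
  have hcq : (c : ℚ) ≠ 0 := by positivity
  have hbonus : ((b : ℚ) - 1) * (c - 1) ≤ db := by
    have hdb' : db = DiscriminantBonus.discriminantBonus K v αL πL := by
      rw [hdb, DiscriminantBonus.discriminantBonus, ← sum_sub_distrib]
      congr 1
      ext p
      simp
    rw [hdb', ← hdeg]
    refine DiscriminantBonus.mul_le_discriminantBonus hv_mul hv_add hv_gal hv_int hv_res ?_
      (fun h => hα0 (by rw [← hαL, h, map_zero])) hgen hb (by rw [hαL, hval, hdeg])
    rw [hdeg, eq_div_iff hcq, mul_comm, hπL]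
  refine ⟨fun hc2 => by subst hc2; norm_num at hbonus; linarith, fun hc3 hb3 => ?_⟩
  obtain ⟨hle, hrigid⟩ := DiscriminantBonus.two_mul_div_add_sub_one_le_mul hb3 hc3 hcop
  have hcast : (((b - 1) * (c - 1) : ℕ) : ℚ) = ((b : ℚ) - 1) * (c - 1) := by
    push_cast [Nat.one_le_of_lt hb, Nat.one_le_of_lt hc]
    ring
  rw [← hcast] at hbonus
  refine ⟨le_trans (by exact_mod_cast hle) hbonus, fun heq => hrigid (le_antisymm hle ?_)⟩
  exact_mod_cast heq ▸ hbonus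

/-- Let `K` be a field, Henselian with respect to a discrete valuation
`ν_K` with algebraically closed residue field, with fixed algebraic closure `Kbar` and
(unique, Galois-invariant) extension `v` of `ν_K`, normalized so that a uniformizer
`πK` satisfies `v πK = 1` and `v` is `ℤ`-valued on `K`; algebraic closedness of the
residue field is expressed by `hv_res`.

Let `α ∈ K^sep` with `ν_K(α) = b/c` written in lowest terms (`b, c` coprime positive
integers), and suppose `[K(α):K] = c` (realized by an abstract field `L = K(α)` with
`K`-embedding `ιL : L → Kbar` and generator `αL ↦ α`).  Let
`db := db_K(α) = Σ_{σ≠τ ∈ Hom_K(L,Kbar)} ν(σ(α) − τ(α)) − Σ_{σ≠τ} ν(σ(π_L) − τ(π_L))`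
for a uniformizer `π_L` of `L`.  If `c = 2`, then `db ≥ b − 1`.  If `c ≥ 3` and
`b ≥ 3`, then `db ≥ 2(⌊b/c⌋ + c − 1)`, and equality can hold in this case only if
`b = 3` or `b/c = 4/3`. -/
theorem discriminant_bonus_length_one
    {K Kbar : Type*} [Field K] [Field Kbar] [Algebra K Kbar] [IsAlgClosure K Kbar]
    (v : Kbar → ℚ)
    (hv_mul : ∀ x y : Kbar, x ≠ 0 → y ≠ 0 → v (x * y) = v x + v y)
    (hv_add : ∀ x y : Kbar, x ≠ 0 → y ≠ 0 → x + y ≠ 0 → min (v x) (v y) ≤ v (x + y))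
    (hv_gal : ∀ (σ : Kbar ≃ₐ[K] Kbar) (x : Kbar), v (σ x) = v x)
    (hv_int : ∀ x : K, x ≠ 0 → ∃ n : ℤ, v (algebraMap K Kbar x) = (n : ℚ))
    (πK : K) (hπK : πK ≠ 0 ∧ v (algebraMap K Kbar πK) = 1)
    (hv_res : ∀ x : Kbar, x ≠ 0 → 0 ≤ v x →
      ∃ η : K, x = algebraMap K Kbar η ∨ 0 < v (x - algebraMap K Kbar η))
    (α : Kbar) (hα0 : α ≠ 0) (hsep : (minpoly K α).Separable)
    (b c : ℕ) (hb : 0 < b) (hc : 0 < c) (hcop : Nat.Coprime b c)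
    (hval : v α = (b : ℚ) / (c : ℚ))
    (L : Type*) [Field L] [Algebra K L] [FiniteDimensional K L]
    (ιL : L →ₐ[K] Kbar)
    (αL : L) (hαL : ιL αL = α) (hgen : Algebra.adjoin K {αL} = ⊤)
    (hdeg : Module.finrank K L = c)
    (πL : L) (hπL : (c : ℚ) * v (ιL πL) = 1)
    (db : ℚ)
    (hdb : db =
      (∑ p ∈ (univ : Finset ((L →ₐ[K] Kbar) × (L →ₐ[K] Kbar))).filter
          (fun p => p.1 ≠ p.2), v (p.1 αL - p.2 αL))
      - (∑ p ∈ (univ : Finset ((L →ₐ[K] Kbar) × (L →ₐ[K] Kbar))).filter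
          (fun p => p.1 ≠ p.2), v (p.1 πL - p.2 πL))) :
    (c = 2 → (b : ℚ) - 1 ≤ db) ∧
    (3 ≤ c → 3 ≤ b →
      ((2 * (b / c + c - 1) : ℕ) : ℚ) ≤ db ∧
      (db = ((2 * (b / c + c - 1) : ℕ) : ℚ) → b = 3 ∨ (b = 4 ∧ c = 3))) :=
  discriminant_bonus_length_one_general v hv_mul hv_add hv_gal hv_int hv_res α hα0 hsep b c hb hc
    hcop hval L ιL αL hαL hgen hdeg πL hπL db hdb
end

section
/- Let α, β ∈ K̄ be distinct elements algebraic over K, and write ν(α − β) = b/c in lowest terms (c the positive denominator). If c = [K(α):K] · [K(β):K], then [K(α,β):K] = [K(α):K] · [K(β):K]; in other words, K(α) and K(β) are linearly disjoint over K. -/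
/-!
Write `γ = α - β` and `n = [K(γ):K]`. All roots of the minimal polynomial of `γ` are Galois
conjugate to `γ`, so they share its valuation, and the constant coefficient, an element of `K`,
has valuation `n · v γ ∈ ℤ`. Hence the denominator of `v γ` divides `n`, which divides
`[K(α,β):K]` since `γ ∈ K(α,β)`. As `[K(α,β):K] ≤ [K(α):K]·[K(β):K]` always holds, a denominator
equal to that product forces equality.
-/

open IntermediateField Polynomial

theorem Rat.den_dvd_of_natCast_mul_eq_intCast {q : ℚ} {n : ℕ} {m : ℤ} (hn : n ≠ 0)
    (h : n * q = m) : q.den ∣ n := by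
  have hq : q = Rat.divInt m n := by
    rw [Rat.divInt_eq_div, ← h]; push_cast; field_simp
  exact_mod_cast hq ▸ Rat.den_dvd m n

section Valuation

variable {L : Type*} [Field L] {v : L → ℚ}

theorem val_neg_one_pow (hv_mul : ∀ x y : L, x ≠ 0 → y ≠ 0 → v (x * y) = v x + v y) (n : ℕ) :
    v ((-1) ^ n) = 0 := by
  have h_one : v 1 = 0 := by simpa using hv_mul 1 1 one_ne_zero one_ne_zero
  have h_neg_one : v (-1) = 0 := by
    have := hv_mul (-1) (-1) (by norm_num) (by norm_num)
    rw [neg_mul_neg, one_mul, h_one] at this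
    linarith
  rcases neg_one_pow_eq_or L n with h | h <;> rw [h] <;> assumption

theorem val_multiset_prod_of_forall_val_eq
    (hv_mul : ∀ x y : L, x ≠ 0 → y ≠ 0 → v (x * y) = v x + v y) {c : ℚ} {s : Multiset L}
    (hs : ∀ x ∈ s, x ≠ 0 ∧ v x = c) : v s.prod = s.card * c := by
  induction s using Multiset.induction with
  | empty => simpa using val_neg_one_pow hv_mul 0
  | cons a t ih =>
    have ha := hs a (Multiset.mem_cons_self a t)
    have ht : ∀ x ∈ t, x ≠ 0 ∧ v x = c := fun x hx => hs x (Multiset.mem_cons_of_mem hx)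
    have ht0 : t.prod ≠ 0 := Multiset.prod_ne_zero fun h0 => (ht 0 h0).1 rfl
    rw [Multiset.prod_cons, hv_mul a t.prod ha.1 ht0, ha.2, ih ht, Multiset.card_cons]
    push_cast
    ring

end Valuation

section Galois

variable {K L : Type*} [Field K] [Field L] [Algebra K L] [Normal K L] {v : L → ℚ}

theorem natDegree_minpoly_mul_val
    (hv_mul : ∀ x y : L, x ≠ 0 → y ≠ 0 → v (x * y) = v x + v y)
    (hv_gal : ∀ (σ : L ≃ₐ[K] L) (x : L), v (σ x) = v x) {γ : L} (hγ : γ ≠ 0) :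
    (minpoly K γ).natDegree * v γ = v (algebraMap K L ((minpoly K γ).coeff 0)) := by
  have hγ_int : IsIntegral K γ := Algebra.IsIntegral.isIntegral γ
  set P := (minpoly K γ).map (algebraMap K L)
  have hP : P.Splits := Normal.splits inferInstance γ
  have h_conj : ∀ r ∈ P.roots, r ≠ 0 ∧ v r = v γ := by
    intro r hr
    have hr' : aeval r (minpoly K γ) = 0 := by
      simpa [P, aeval_def, eval_map] using isRoot_of_mem_roots hr
    obtain ⟨σ, rfl⟩ := minpoly.exists_algEquiv_of_root' (Algebra.IsAlgebraic.isAlgebraic γ) hr'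
    exact ⟨(map_ne_zero σ).mpr hγ, hv_gal σ γ⟩
  rw [← coeff_map, hP.coeff_zero_eq_prod_roots_of_monic ((minpoly.monic hγ_int).map _),
    hv_mul _ _ (pow_ne_zero _ (by norm_num)) (Multiset.prod_ne_zero fun h0 => (h_conj 0 h0).1 rfl),
    val_neg_one_pow hv_mul, zero_add, val_multiset_prod_of_forall_val_eq hv_mul h_conj,
    ← hP.natDegree_eq_card_roots, natDegree_map]

theorem den_val_dvd_natDegree_minpoly
    (hv_mul : ∀ x y : L, x ≠ 0 → y ≠ 0 → v (x * y) = v x + v y)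
    (hv_gal : ∀ (σ : L ≃ₐ[K] L) (x : L), v (σ x) = v x)
    (hv_int : ∀ x : K, x ≠ 0 → ∃ n : ℤ, v (algebraMap K L x) = (n : ℚ)) {γ : L} (hγ : γ ≠ 0) :
    (v γ).den ∣ (minpoly K γ).natDegree := by
  have hγ_int : IsIntegral K γ := Algebra.IsIntegral.isIntegral γ
  obtain ⟨m, hm⟩ := hv_int _ (minpoly.coeff_zero_ne_zero hγ_int hγ)
  exact Rat.den_dvd_of_natCast_mul_eq_intCast (minpoly.natDegree_pos hγ_int).ne'
    ((natDegree_minpoly_mul_val hv_mul hv_gal hγ).trans hm)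

end Galois

theorem IntermediateField.natDegree_minpoly_sub_dvd_finrank_adjoin_pair {K E : Type*} [Field K]
    [Field E] [Algebra K E] {α β : E} (hα : IsIntegral K α) (hβ : IsIntegral K β) :
    (minpoly K (α - β)).natDegree ∣ Module.finrank K K⟮α, β⟯ := by
  rw [← adjoin.finrank (hα.sub hβ)]
  refine finrank_dvd_of_le_right (adjoin_simple_le_iff.mpr (sub_mem ?_ ?_))
  · exact subset_adjoin K _ (by simp)
  · exact subset_adjoin K _ (by simp)

theorem linearly_disjoint_of_denominator_general
    {K Kbar : Type*} [Field K] [Field Kbar] [Algebra K Kbar] [IsAlgClosure K Kbar]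
    (v : Kbar → ℚ)
    (hv_mul : ∀ x y : Kbar, x ≠ 0 → y ≠ 0 → v (x * y) = v x + v y)
    (hv_gal : ∀ (σ : Kbar ≃ₐ[K] Kbar) (x : Kbar), v (σ x) = v x)
    (hv_int : ∀ x : K, x ≠ 0 → ∃ n : ℤ, v (algebraMap K Kbar x) = (n : ℚ))
    (α β : Kbar) (hne : α ≠ β)
    (hden : (v (α - β)).den =
      Module.finrank K ↥(IntermediateField.adjoin K ({α} : Set Kbar)) *
      Module.finrank K ↥(IntermediateField.adjoin K ({β} : Set Kbar))) :
    Module.finrank K ↥(IntermediateField.adjoin K ({α, β} : Set Kbar)) =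
      Module.finrank K ↥(IntermediateField.adjoin K ({α} : Set Kbar)) *
      Module.finrank K ↥(IntermediateField.adjoin K ({β} : Set Kbar)) := by
  have hα : IsIntegral K α := Algebra.IsIntegral.isIntegral α
  have hβ : IsIntegral K β := Algebra.IsIntegral.isIntegral β
  have : FiniteDimensional K K⟮α, β⟯ := finiteDimensional_adjoin_pair hα hβ
  refine le_antisymm ?_ (Nat.le_of_dvd Module.finrank_pos ?_)
  · rw [Set.insert_eq, adjoin_union]
    exact finrank_sup_le _ _
  · rw [← hden]
    exact (den_val_dvd_natDegree_minpoly hv_mul hv_gal hv_int (sub_ne_zero.mpr hne)).trans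
      (natDegree_minpoly_sub_dvd_finrank_adjoin_pair hα hβ)

/-- Let `K` be a field, Henselian with respect to a discrete valuation
`ν_K` with algebraically closed residue field, with fixed algebraic closure `Kbar` and
(unique, Galois-invariant) extension `v` of `ν_K`, normalized so that a uniformizer
`πK` satisfies `v πK = 1` and `v` is `ℤ`-valued on `K`.

Let `α, β ∈ Kbar` be distinct elements (algebraic over `K`, automatically), and write
`ν(α − β) = b/c` in lowest terms (`c = (v (α − β)).den` the positive denominator).
If `c = [K(α):K]·[K(β):K]`, then `[K(α,β):K] = [K(α):K]·[K(β):K]`; in other words,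
`K(α)` and `K(β)` are linearly disjoint over `K`. -/
theorem linearly_disjoint_of_denominator
    {K Kbar : Type*} [Field K] [Field Kbar] [Algebra K Kbar] [IsAlgClosure K Kbar]
    (v : Kbar → ℚ)
    (hv_mul : ∀ x y : Kbar, x ≠ 0 → y ≠ 0 → v (x * y) = v x + v y)
    (hv_add : ∀ x y : Kbar, x ≠ 0 → y ≠ 0 → x + y ≠ 0 → min (v x) (v y) ≤ v (x + y))
    (hv_gal : ∀ (σ : Kbar ≃ₐ[K] Kbar) (x : Kbar), v (σ x) = v x)
    (hv_int : ∀ x : K, x ≠ 0 → ∃ n : ℤ, v (algebraMap K Kbar x) = (n : ℚ))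
    (πK : K) (hπK : πK ≠ 0 ∧ v (algebraMap K Kbar πK) = 1)
    (hv_res : ∀ x : Kbar, x ≠ 0 → 0 ≤ v x →
      ∃ η : K, x = algebraMap K Kbar η ∨ 0 < v (x - algebraMap K Kbar η))
    (α β : Kbar) (hne : α ≠ β)
    (hden : (v (α - β)).den =
      Module.finrank K ↥(IntermediateField.adjoin K ({α} : Set Kbar)) *
      Module.finrank K ↥(IntermediateField.adjoin K ({β} : Set Kbar))) :
    Module.finrank K ↥(IntermediateField.adjoin K ({α, β} : Set Kbar)) =
      Module.finrank K ↥(IntermediateField.adjoin K ({α} : Set Kbar)) *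
      Module.finrank K ↥(IntermediateField.adjoin K ({β} : Set Kbar)) :=
  linearly_disjoint_of_denominator_general v hv_mul hv_gal hv_int α β hne hden
end

section
/- Let n ≥ 1 be an integer. Let d₁ = 1 and let d₁ | d₂ | ⋯ | d_n | d_{n+1} be positive integers; set e_i := d_{i+1}/d_i for 1 ≤ i ≤ n and assume e_i ≥ 2 for all i; write e := e_n. Let 0 < λ₁ < λ₂ < ⋯ < λ_n be rational numbers such that λ₁ ≥ 1/e₁ and such that d_i·λ_{i−1} is a positive integer for every 2 ≤ i ≤ n. Set λ₀ := 0 and e₀ := 1, and define B₀ := Σ_{i=1}^{n} ( ⌊d_i λ_i⌋ − d_i e_{i−1} λ_{i−1} + e_i ). Then B₀ ≤ ⌊d_n λ_n⌋ + e, and the inequality is strict unless n = 1, or n = 2 and λ₁ = 1/e₁. -/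
/-!
Since `λ₀ = 0`, shifting the subtracted terms by one index rewrites `B₀` as `⌊d_n λ_n⌋ + e_n`
plus `∑_{i<n} (⌊d_i λ_i⌋ + e_i − e_i M_i)` with `M_i := d_{i+1} λ_i` a positive integer.
As `d_i λ_i = M_i / e_i` and `e_i ≥ 2`, each of these terms is `≤ 0`, with equality exactly
when `M_i = 1`. Now `M_1 = e₁ λ₁ = 1` iff `λ₁ = 1/e₁`, while `M_2 > e₂ M_1 ≥ 2` when `n ≥ 3`.
-/

open Finset

theorem sum_Icc_sub_eq_add_sum_sub_succ {M : Type*} [AddCommGroup M] (f g : ℕ → M)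
    (hg : g 1 = 0) (m : ℕ) :
    ∑ i ∈ Icc 1 (m + 1), (f i - g i) = f (m + 1) + ∑ i ∈ Icc 1 m, (f i - g (i + 1)) := by
  induction m with
  | zero => simp [hg]
  | succ k ih =>
    rw [sum_Icc_succ_top (by omega), ih, sum_Icc_succ_top (by omega)]
    abel

theorem Nat.div_add_lt_mul {M e : ℕ} (hM : 2 ≤ M) (he : 2 ≤ e) : M / e + e < e * M := by
  have : M / e < M := Nat.div_lt_self (by omega) (by omega)
  nlinarith

theorem Nat.div_add_le_mul {M e : ℕ} (hM : 1 ≤ M) (he : 2 ≤ e) : M / e + e ≤ e * M := by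
  obtain rfl | hM := hM.eq_or_lt
  · simp [Nat.div_eq_of_lt (by omega : 1 < e)]
  · exact (Nat.div_add_lt_mul hM he).le

section FloorRing

variable {K : Type*} [Field K] [LinearOrder K] [IsStrictOrderedRing K] [FloorRing K]
  {x : K} {e M : ℕ}

theorem Int.floor_eq_natCast_div_of_mul_eq (he : e ≠ 0) (hx : e * x = M) :
    ⌊x⌋ = ((M / e : ℕ) : ℤ) := by
  rw [eq_div_of_mul_eq (by exact_mod_cast he) ((mul_comm _ _).trans hx),
    Int.floor_div_natCast, Int.floor_natCast, Int.natCast_div]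

theorem Int.floor_add_le_mul_of_mul_eq (hM : 1 ≤ M) (he : 2 ≤ e) (hx : e * x = M) :
    (⌊x⌋ : K) + e ≤ e * M := by
  rw [Int.floor_eq_natCast_div_of_mul_eq (by omega) hx]
  exact_mod_cast Nat.div_add_le_mul hM he

theorem Int.floor_add_lt_mul_of_mul_eq (hM : 2 ≤ M) (he : 2 ≤ e) (hx : e * x = M) :
    (⌊x⌋ : K) + e < e * M := by
  rw [Int.floor_eq_natCast_div_of_mul_eq (by omega) hx]
  exact_mod_cast Nat.div_add_lt_mul hM he

end FloorRing

section MacLaneData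

variable {d e : ℕ → ℕ} {lam : ℕ → ℚ} {i M : ℕ}

theorem e_mul_d_mul_lam_eq (hde : d (i + 1) = e i * d i)
    (hM : (d (i + 1) : ℚ) * lam i = M) : (e i : ℚ) * (d i * lam i) = M := by
  rw [← hM, hde]
  push_cast
  ring

theorem floor_add_sub_mul_nonpos (hde : d (i + 1) = e i * d i) (he : 2 ≤ e i) (hM0 : 0 < M)
    (hM : (d (i + 1) : ℚ) * lam i = M) :
    (⌊(d i : ℚ) * lam i⌋ : ℚ) + e i - d (i + 1) * e i * lam i ≤ 0 := by
  have := Int.floor_add_le_mul_of_mul_eq hM0 he (e_mul_d_mul_lam_eq hde hM)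
  rw [mul_right_comm, hM]
  linarith

theorem floor_add_sub_mul_neg (hde : d (i + 1) = e i * d i) (he : 2 ≤ e i)
    (hM : (d (i + 1) : ℚ) * lam i = M) (h1 : 1 < (d (i + 1) : ℚ) * lam i) :
    (⌊(d i : ℚ) * lam i⌋ : ℚ) + e i - d (i + 1) * e i * lam i < 0 := by
  have hM2 : 2 ≤ M := by
    rw [hM] at h1
    exact_mod_cast h1
  have := Int.floor_add_lt_mul_of_mul_eq hM2 he (e_mul_d_mul_lam_eq hde hM)
  rw [mul_right_comm, hM]
  linarith

theorem exists_one_lt_natCast_mul_lam {m : ℕ} (hd1 : d 1 = 1)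
    (hde : ∀ i, 1 ≤ i → i ≤ m + 1 → d (i + 1) = e i * d i)
    (he2 : ∀ i, 1 ≤ i → i ≤ m + 1 → 2 ≤ e i)
    (hlammono : ∀ i, 1 ≤ i → i + 1 ≤ m + 1 → lam i < lam (i + 1))
    (hlam1 : (1 : ℚ) / (e 1 : ℚ) ≤ lam 1)
    (h : ¬ (m + 1 = 1 ∨ (m + 1 = 2 ∧ lam 1 = (1 : ℚ) / (e 1 : ℚ)))) :
    ∃ i ∈ Icc 1 m, 1 < (d (i + 1) : ℚ) * lam i := by
  have he1 : (0 : ℚ) < e 1 := by exact_mod_cast (he2 1 le_rfl (by omega)).trans_lt' two_pos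
  have hd2 : (d 2 : ℚ) = e 1 := by simp [hde 1 le_rfl (by omega), hd1]
  obtain rfl | hm : m = 1 ∨ 2 ≤ m := by omega
  · have hlt : 1 / (e 1 : ℚ) < lam 1 := hlam1.lt_of_ne (by tauto)
    refine ⟨1, by simp, ?_⟩
    rwa [hd2, ← div_lt_iff₀' he1]
  · have he2' : (2 : ℚ) ≤ e 2 := by exact_mod_cast he2 2 (by omega) (by omega)
    have h1 : 1 ≤ (d 2 : ℚ) * lam 1 := by rwa [hd2, ← div_le_iff₀' he1]
    refine ⟨2, mem_Icc.2 ⟨by omega, hm⟩, ?_⟩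
    calc (1 : ℚ) < e 2 * (d 2 * lam 1) := by nlinarith
      _ < e 2 * (d 2 * lam 2) := by
        have := hlammono 1 le_rfl (by omega)
        rw [hd2]
        gcongr
      _ = d 3 * lam 2 := by
        rw [hde 2 (by omega) (by omega)]
        push_cast
        ring

end MacLaneData

theorem B0_le_floor_add_e_general
    (n : ℕ) (hn : 1 ≤ n)
    (d e : ℕ → ℕ) (lam : ℕ → ℚ)
    (hd1 : d 1 = 1)
    (hde : ∀ i, 1 ≤ i → i ≤ n → d (i + 1) = e i * d i)
    (he2 : ∀ i, 1 ≤ i → i ≤ n → 2 ≤ e i)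
    (hlam0 : lam 0 = 0)
    (hlammono : ∀ i, 1 ≤ i → i + 1 ≤ n → lam i < lam (i + 1))
    (hlam1 : (1 : ℚ) / (e 1 : ℚ) ≤ lam 1)
    (hint : ∀ i, 2 ≤ i → i ≤ n → ∃ m : ℕ, 0 < m ∧ (d i : ℚ) * lam (i - 1) = (m : ℚ))
    (B₀ : ℚ)
    (hB₀ : B₀ = ∑ i ∈ Finset.Icc 1 n,
      ((⌊(d i : ℚ) * lam i⌋ : ℚ) - (d i : ℚ) * (e (i - 1) : ℚ) * lam (i - 1)
        + (e i : ℚ))) :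
    B₀ ≤ (⌊(d n : ℚ) * lam n⌋ : ℚ) + (e n : ℚ) ∧
      (¬ (n = 1 ∨ (n = 2 ∧ lam 1 = (1 : ℚ) / (e 1 : ℚ))) →
        B₀ < (⌊(d n : ℚ) * lam n⌋ : ℚ) + (e n : ℚ)) := by
  obtain ⟨m, rfl⟩ : ∃ m, n = m + 1 := ⟨n - 1, by omega⟩
  have hB : B₀ = (⌊(d (m + 1) : ℚ) * lam (m + 1)⌋ : ℚ) + e (m + 1) +
      ∑ i ∈ Icc 1 m, ((⌊(d i : ℚ) * lam i⌋ : ℚ) + e i - d (i + 1) * e i * lam i) := by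
    rw [hB₀]
    convert sum_Icc_sub_eq_add_sum_sub_succ (fun i ↦ (⌊(d i : ℚ) * lam i⌋ : ℚ) + e i)
      (fun i ↦ (d i : ℚ) * e (i - 1) * lam (i - 1)) (by simp [hlam0]) m using 1
    · exact sum_congr rfl fun i _ ↦ by ring
    · simp only [Nat.add_sub_cancel]
  have hmult : ∀ i ∈ Icc 1 m, ∃ M : ℕ, 0 < M ∧ (d (i + 1) : ℚ) * lam i = M := fun i hi ↦ by
    simpa using hint (i + 1) (by simp at hi; omega) (by simp at hi; omega)
  have hterm : ∀ i ∈ Icc 1 m,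
      (⌊(d i : ℚ) * lam i⌋ : ℚ) + e i - d (i + 1) * e i * lam i ≤ 0 := fun i hi ↦ by
    obtain ⟨M, hM0, hM⟩ := hmult i hi
    simp only [mem_Icc] at hi
    exact floor_add_sub_mul_nonpos (hde i hi.1 (by omega)) (he2 i hi.1 (by omega)) hM0 hM
  refine ⟨by linarith [sum_nonpos hterm], fun h ↦ ?_⟩
  obtain ⟨j, hj, h1⟩ := exists_one_lt_natCast_mul_lam hd1 hde he2 hlammono hlam1 h
  obtain ⟨M, -, hM⟩ := hmult j hj
  simp only [mem_Icc] at hj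
  have := floor_add_sub_mul_neg (hde j hj.1 (by omega)) (he2 j hj.1 (by omega)) hM h1
  linarith [sum_neg' hterm ⟨j, mem_Icc.2 hj, this⟩]

/-- Let `n ≥ 1` be an integer.  Let `d₁ = 1` and let
`d₁ ∣ d₂ ∣ ⋯ ∣ d_n ∣ d_{n+1}` be positive integers; set `e_i := d_{i+1}/d_i` for
`1 ≤ i ≤ n` (so `d_{i+1} = e_i · d_i`) and assume `e_i ≥ 2` for all `i`; write
`e := e_n`.  Let `0 < λ₁ < λ₂ < ⋯ < λ_n` be rational numbers such that `λ₁ ≥ 1/e₁`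
and such that `d_i·λ_{i−1}` is a positive integer for every `2 ≤ i ≤ n`.  Set
`λ₀ := 0` and `e₀ := 1`, and define
`B₀ := Σ_{i=1}^{n} ( ⌊d_i λ_i⌋ − d_i e_{i−1} λ_{i−1} + e_i )`.
Then `B₀ ≤ ⌊d_n λ_n⌋ + e`, and the inequality is strict unless `n = 1`, or `n = 2`
and `λ₁ = 1/e₁`. -/
theorem B0_le_floor_add_e
    (n : ℕ) (hn : 1 ≤ n)
    (d e : ℕ → ℕ) (lam : ℕ → ℚ)
    (hd1 : d 1 = 1)
    (hdpos : ∀ i, 1 ≤ i → i ≤ n + 1 → 0 < d i)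
    (he0 : e 0 = 1)
    (hde : ∀ i, 1 ≤ i → i ≤ n → d (i + 1) = e i * d i)
    (he2 : ∀ i, 1 ≤ i → i ≤ n → 2 ≤ e i)
    (hlam0 : lam 0 = 0)
    (hlampos : 0 < lam 1)
    (hlammono : ∀ i, 1 ≤ i → i + 1 ≤ n → lam i < lam (i + 1))
    (hlam1 : (1 : ℚ) / (e 1 : ℚ) ≤ lam 1)
    (hint : ∀ i, 2 ≤ i → i ≤ n → ∃ m : ℕ, 0 < m ∧ (d i : ℚ) * lam (i - 1) = (m : ℚ))
    (B₀ : ℚ)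
    (hB₀ : B₀ = ∑ i ∈ Finset.Icc 1 n,
      ((⌊(d i : ℚ) * lam i⌋ : ℚ) - (d i : ℚ) * (e (i - 1) : ℚ) * lam (i - 1)
        + (e i : ℚ))) :
    B₀ ≤ (⌊(d n : ℚ) * lam n⌋ : ℚ) + (e n : ℚ) ∧
      (¬ (n = 1 ∨ (n = 2 ∧ lam 1 = (1 : ℚ) / (e 1 : ℚ))) →
        B₀ < (⌊(d n : ℚ) * lam n⌋ : ℚ) + (e n : ℚ)) :=
  B0_le_floor_add_e_general n hn d e lam hd1 hde he2 hlam0 hlammono hlam1 hint B₀ hB₀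
end
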